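/- arXiv:1610.00663 — 3 statements merged into one kernel-verified Lean document; each statement's English description precedes it below -/
import Mathlib

section
/- Composition theorem: Let U_1,...,U_K be a K-round interactive mechanism initiated at agent A, so that for all k the Markov chains Y2 <-> (U_1,...,U_{2k-2}, X1) <-> U_{2k-1} and Y1 <-> (U_1,...,U_{2k-1}, X2) <-> U_{2k} hold. Then for every even round k, I(Y1; U_k | X2, U_1,...,U_{k-1}) = 0, and the total leakage of agent A's private data at agent B decomposes exactly as the sum of per-round leakages over the rounds initiated by A: I(Y1; U_1,...,U_K, X2) = I(Y1; X2) + sum over odd k in {1,3,...,K-1} of I(Y1; U_k | X2, U_1,...,U_{k-1}). The symmetric decomposition holds for I(Y2; U_1,...,U_K, X1) over the even rounds. -/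
/-!
Lemma 1 (monotonicity of sum leakage) for two-agent interactive privacy mechanisms.
-/

open scoped BigOperators

noncomputable section

/-- A probability mass function on a finite type. -/
def IsPMF {α : Type*} [Fintype α] (p : α → ℝ) : Prop :=
  (∀ a, 0 ≤ p a) ∧ ∑ a, p a = 1

/-- Shannon entropy (natural logarithm). -/
def Hent {α : Type*} [Fintype α] (p : α → ℝ) : ℝ :=
  ∑ a, Real.negMulLog (p a)

open Classical in
/-- Distribution (pushforward) of a random variable `f` under a joint pmf `q`. -/
def pushf {Ω α : Type*} [Fintype Ω] (q : Ω → ℝ) (f : Ω → α) : α → ℝ :=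
  fun a => ∑ ω, if f ω = a then q ω else 0

/-- Entropy of a random variable `f` under joint pmf `q`. -/
def HRV {Ω α : Type*} [Fintype Ω] [Fintype α] (q : Ω → ℝ) (f : Ω → α) : ℝ :=
  Hent (pushf q f)

/-- Mutual information `I(f;g)` under joint pmf `q`. -/
def MIrv {Ω α β : Type*} [Fintype Ω] [Fintype α] [Fintype β]
    (q : Ω → ℝ) (f : Ω → α) (g : Ω → β) : ℝ :=
  HRV q f + HRV q g - HRV q (fun ω => (f ω, g ω))

/-- A `K`-round single-letter interactive mechanism, where the agent observing the first
(public-data) argument sends in rounds `0, 2, 4, …` (`1, 3, 5, …` in 1-based numbering, i.e.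
it initiates the interaction) and the agent observing the second argument sends in rounds
`1, 3, 5, …`.  Round `k` produces an output in a finite alphabet `Fin (nU k)`, via a
conditional probability law that may depend on the sender's public data and on all the
previously exchanged outputs. -/
structure InterMech (K : ℕ) (X1 X2 : Type) where
  nU : Fin K → ℕ
  κ : (k : Fin K) → X1 → X2 → ((j : Fin K) → Fin (nU j)) → Fin (nU k) → ℝ
  nonneg : ∀ k x1 x2 u v, 0 ≤ κ k x1 x2 u v
  sum_one : ∀ k x1 x2 u, ∑ v, κ k x1 x2 u v = 1
  -- the round-`k` conditional law only depends on the outputs of rounds `j < k`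
  hist : ∀ (k : Fin K) x1 x2 u u', (∀ j : Fin K, (j : ℕ) < (k : ℕ) → u j = u' j) →
    κ k x1 x2 u = κ k x1 x2 u'
  -- in even (0-based) rounds the output is generated from `(X1, U_{<k})` only
  firstSends : ∀ (k : Fin K) x1 x2 x2' u, Even (k : ℕ) → κ k x1 x2 u = κ k x1 x2' u
  -- in odd (0-based) rounds the output is generated from `(X2, U_{<k})` only
  secondSends : ∀ (k : Fin K) x1 x1' x2 u, ¬ Even (k : ℕ) → κ k x1 x2 u = κ k x1' x2 u

/-- Joint pmf of `(X1, Y1, X2, Y2, U_1, …, U_K)` for a mechanism initiated at agent A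
(who observes `(X1,Y1)`). -/
def mjointA {X1 Y1 X2 Y2 : Type} {K : ℕ}
    (src : X1 × Y1 × X2 × Y2 → ℝ) (m : InterMech K X1 X2) :
    X1 × Y1 × X2 × Y2 × ((j : Fin K) → Fin (m.nU j)) → ℝ :=
  fun w => src (w.1, w.2.1, w.2.2.1, w.2.2.2.1) *
    ∏ k, m.κ k w.1 w.2.2.1 w.2.2.2.2 (w.2.2.2.2 k)


/-- Conditional entropy `H(f | g)` under joint pmf `q`. -/
def condEntRV {Ω α β : Type*} [Fintype Ω] [Fintype α] [Fintype β]
    (q : Ω → ℝ) (f : Ω → α) (g : Ω → β) : ℝ :=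
  HRV q (fun ω => (f ω, g ω)) - HRV q g

/-- Conditional mutual information `I(f ; g | h)` under joint pmf `q`. -/
def condMIrv {Ω α β γ : Type*} [Fintype Ω] [Fintype α] [Fintype β] [Fintype γ]
    (q : Ω → ℝ) (f : Ω → α) (g : Ω → β) (h : Ω → γ) : ℝ :=
  condEntRV q f h + condEntRV q g h - condEntRV q (fun ω => (f ω, g ω)) h

/-- The "censored history" of the interaction before (0-based) round `k`: it reveals the
outputs `U_j` for `j < k` and nothing else, so that as a random variable it generates the
same information as `(U_1, …, U_k)` (1-based `U^{k-1}`). -/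
def histBefore {K : ℕ} {nU : Fin K → ℕ} (k : Fin K)
    (u : (j : Fin K) → Fin (nU j)) : (j : Fin K) → Option (Fin (nU j)) :=
  fun j => if (j : ℕ) < (k : ℕ) then some (u j) else none

section Aux
open Classical
variable {Ω α β γ : Type*} [Fintype Ω]

lemma pushf_nonneg (q : Ω → ℝ) (hq : ∀ ω, 0 ≤ q ω) (f : Ω → α) (a : α) :
    0 ≤ pushf q f a := by
  unfold pushf
  refine Finset.sum_nonneg fun ω _ => ?_
  split
  · exact hq ω
  · exact le_refl 0

lemma pushf_marg (q : Ω → ℝ) [Fintype α] (f : Ω → α) (g : Ω → β) (b : β) :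
    ∑ a, pushf q (fun ω => (f ω, g ω)) (a, b) = pushf q g b := by
  unfold pushf
  rw [Finset.sum_comm]
  refine Finset.sum_congr rfl fun ω _ => ?_
  by_cases h : g ω = b
  · rw [Finset.sum_eq_single (f ω)]
    · simp [h]
    · intro a _ ha; simp [Prod.ext_iff, Ne.symm ha]
    · simp
  · simp [h, Prod.ext_iff]

lemma pushf_eq_zero_of_notMem (q : Ω → ℝ) (f : Ω → α) (a : α)
    (ha : ∀ ω, f ω ≠ a) : pushf q f a = 0 := by
  unfold pushf
  exact Finset.sum_eq_zero fun ω _ => by simp [ha ω]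

lemma HRV_eq_sum_image (q : Ω → ℝ) [Fintype α] (f : Ω → α) :
    HRV q f = ∑ a ∈ Finset.image f Finset.univ, Real.negMulLog (pushf q f a) := by
  unfold HRV Hent
  refine (Finset.sum_subset (Finset.subset_univ _) fun a _ ha => ?_).symm
  rw [pushf_eq_zero_of_notMem, Real.negMulLog_zero]
  intro ω hω
  exact ha (Finset.mem_image.mpr ⟨ω, Finset.mem_univ ω, hω⟩)

lemma HRV_congr (q : Ω → ℝ) [Fintype α] [Fintype β] (f : Ω → α) (g : Ω → β) (φ : α → β)
    (hg : ∀ ω, g ω = φ (f ω)) (hinj : ∀ ω ω', φ (f ω) = φ (f ω') → f ω = f ω') :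
    HRV q f = HRV q g := by
  rw [HRV_eq_sum_image, HRV_eq_sum_image]
  have himg : Finset.image g Finset.univ = Finset.image φ (Finset.image f Finset.univ) := by
    rw [Finset.image_image]
    exact Finset.image_congr fun ω _ => hg ω
  have hio : ∀ a ∈ Finset.image f Finset.univ, ∀ a' ∈ Finset.image f Finset.univ,
      φ a = φ a' → a = a' := by
    intro a ha a' ha' hφ
    obtain ⟨ω, -, rfl⟩ := Finset.mem_image.mp ha
    obtain ⟨ω', -, rfl⟩ := Finset.mem_image.mp ha'
    exact hinj _ _ hφ
  rw [himg, Finset.sum_image hio]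
  refine Finset.sum_congr rfl fun a ha => ?_
  obtain ⟨ω₀, -, rfl⟩ := Finset.mem_image.mp ha
  congr 1
  unfold pushf
  refine Finset.sum_congr rfl fun ω _ => ?_
  have : (g ω = φ (f ω₀)) = (f ω = f ω₀) := by
    rw [hg ω]
    exact propext ⟨fun h => hinj _ _ h, fun h => by rw [h]⟩
  simp only [this]

end Aux

section CMI
open Classical
variable {Ω A B C : Type*} [Fintype Ω] [Fintype A] [Fintype B] [Fintype C]

lemma condMI_zero (q : Ω → ℝ) (hq : ∀ ω, 0 ≤ q ω) (f : Ω → A) (g : Ω → B) (h : Ω → C)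
    (κ : C → B → ℝ)
    (hfact : ∀ y v c, pushf q (fun ω => (f ω, (g ω, h ω))) (y, (v, c)) =
      pushf q (fun ω => (f ω, h ω)) (y, c) * κ c v)
    (hsum : ∀ c, pushf q h c ≠ 0 → ∑ v, κ c v = 1) :
    condMIrv q f g h = 0 := by
  classical
  set s : C → ℝ := fun c => pushf q h c with hs
  set r : A → C → ℝ := fun y c => pushf q (fun ω => (f ω, h ω)) (y, c) with hrdef
  have hrnn : ∀ y c, 0 ≤ r y c := fun y c => pushf_nonneg q hq _ _
  have hr : ∀ c, ∑ y, r y c = s c := fun c => pushf_marg q f h c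
  have hgz : ∀ c, s c = 0 → ∀ y, r y c = 0 := by
    intro c hc y
    have h0 : ∑ y, r y c = 0 := by rw [hr c, hc]
    exact (Finset.sum_eq_zero_iff_of_nonneg (fun y _ => hrnn y c)).mp h0 y (Finset.mem_univ y)
  have hgh : ∀ v c, pushf q (fun ω => (g ω, h ω)) (v, c) = s c * κ c v := by
    intro v c
    rw [← pushf_marg q f (fun ω => (g ω, h ω)) (v, c)]
    calc ∑ y, pushf q (fun ω => (f ω, (g ω, h ω))) (y, (v, c))
        = ∑ y, r y c * κ c v := Finset.sum_congr rfl fun y _ => hfact y v c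
      _ = s c * κ c v := by rw [← Finset.sum_mul, hr c]
  set E : C → ℝ := fun c => ∑ v, Real.negMulLog (κ c v) with hE
  have key : ∀ (c : C) (x : ℝ), (s c = 0 → x = 0) →
      ∑ v, Real.negMulLog (x * κ c v) = Real.negMulLog x + x * E c := by
    intro c x hx
    by_cases hc : s c = 0
    · rw [hx hc]
      simp [Real.negMulLog_zero]
    · calc ∑ v, Real.negMulLog (x * κ c v)
          = ∑ v, (κ c v * Real.negMulLog x + x * Real.negMulLog (κ c v)) := by
            refine Finset.sum_congr rfl fun v _ => ?_
            rw [Real.negMulLog_mul]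
        _ = (∑ v, κ c v) * Real.negMulLog x + x * E c := by
            rw [Finset.sum_add_distrib, ← Finset.sum_mul, ← Finset.mul_sum]
        _ = _ := by rw [hsum c hc, one_mul]
  have H1 : HRV q (fun ω => (f ω, (g ω, h ω))) =
      HRV q (fun ω => (f ω, h ω)) + ∑ c, s c * E c := by
    unfold HRV Hent
    rw [Fintype.sum_prod_type, Fintype.sum_prod_type]
    calc (∑ y, ∑ p : B × C, Real.negMulLog (pushf q (fun ω => (f ω, (g ω, h ω))) (y, p)))
        = ∑ y, ∑ c, ∑ v, Real.negMulLog (r y c * κ c v) := by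
          refine Finset.sum_congr rfl fun y _ => ?_
          rw [Fintype.sum_prod_type, Finset.sum_comm]
          exact Finset.sum_congr rfl fun c _ => Finset.sum_congr rfl fun v _ => by rw [hfact]
      _ = ∑ y, ∑ c, (Real.negMulLog (r y c) + r y c * E c) :=
          Finset.sum_congr rfl fun y _ => Finset.sum_congr rfl fun c _ =>
            key c (r y c) (fun hc => hgz c hc y)
      _ = (∑ y, ∑ c, Real.negMulLog (r y c)) + ∑ y, ∑ c, r y c * E c := by
          simp_rw [Finset.sum_add_distrib]
      _ = (∑ y, ∑ c, Real.negMulLog (r y c)) + ∑ c, s c * E c := by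
          congr 1
          rw [Finset.sum_comm]
          exact Finset.sum_congr rfl fun c _ => by rw [← Finset.sum_mul, hr c]
  have H2 : HRV q (fun ω => (g ω, h ω)) = HRV q h + ∑ c, s c * E c := by
    unfold HRV Hent
    rw [Fintype.sum_prod_type, Finset.sum_comm]
    calc ∑ c, ∑ v, Real.negMulLog (pushf q (fun ω => (g ω, h ω)) (v, c))
        = ∑ c, (Real.negMulLog (s c) + s c * E c) := by
          refine Finset.sum_congr rfl fun c _ => ?_
          rw [show (∑ v, Real.negMulLog (pushf q (fun ω => (g ω, h ω)) (v, c)))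
              = ∑ v, Real.negMulLog (s c * κ c v) from
            Finset.sum_congr rfl fun v _ => by rw [hgh]]
          exact key c (s c) id
      _ = _ := by rw [Finset.sum_add_distrib]
  have H3 : HRV q (fun ω => ((f ω, g ω), h ω)) = HRV q (fun ω => (f ω, (g ω, h ω))) := by
    refine HRV_congr q _ _ (fun p => (p.1.1, (p.1.2, p.2))) (fun ω => rfl) ?_
    intro ω ω' hh
    simp only [Prod.ext_iff] at hh ⊢
    tauto
  simp only [condMIrv, condEntRV]
  linarith [H1, H2, H3]

end CMI

section Mech
open Classical

def histN {K : ℕ} {nU : Fin K → ℕ} (t : ℕ) (u : (j : Fin K) → Fin (nU j)) :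
    (j : Fin K) → Option (Fin (nU j)) :=
  fun j => if (j : ℕ) < t then some (u j) else none

lemma histBefore_eq {K : ℕ} {nU : Fin K → ℕ} (k : Fin K) (u : (j : Fin K) → Fin (nU j)) :
    histBefore k u = histN (k : ℕ) u := rfl

lemma histN_eq_iff {K : ℕ} {nU : Fin K → ℕ} (t : ℕ) (u u' : (j : Fin K) → Fin (nU j)) :
    histN t u = histN t u' ↔ ∀ j : Fin K, (j : ℕ) < t → u j = u' j := by
  constructor
  · intro h j hj
    have := congrFun h j
    simpa [histN, hj] using this
  · intro h
    funext j
    unfold histN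
    split
    · rw [h j ‹_›]
    · rfl

variable {X1 X2 : Type} {K : ℕ}

lemma suffix_sum (m : InterMech K X1 X2) (x1 : X1) (x2 : X2) :
    ∀ n t, t + n = K → ∀ u₀ : (j : Fin K) → Fin (m.nU j),
    (∑ u : (j : Fin K) → Fin (m.nU j),
      if ∀ j : Fin K, (j : ℕ) < t → u j = u₀ j then
        ∏ j ∈ Finset.univ.filter (fun j : Fin K => t ≤ (j : ℕ)), m.κ j x1 x2 u (u j)
      else 0) = 1 := by
  intro n
  induction n with
  | zero =>
    intro t ht u₀
    have hKt : ∀ j : Fin K, (j : ℕ) < t := fun j => by have := j.isLt; omega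
    have hfe : Finset.univ.filter (fun j : Fin K => t ≤ (j : ℕ)) = ∅ := by
      refine Finset.filter_eq_empty_iff.mpr fun j _ => ?_
      have := hKt j
      omega
    have hcond : ∀ u : (j : Fin K) → Fin (m.nU j),
        (∀ j : Fin K, (j : ℕ) < t → u j = u₀ j) ↔ u = u₀ := fun u =>
      ⟨fun h => funext fun j => h j (hKt j), fun h j _ => by rw [h]⟩
    rw [Finset.sum_congr rfl fun u _ => if_congr (hcond u) rfl rfl]
    simp only [hfe, Finset.prod_empty]
    rw [Finset.sum_ite_eq' Finset.univ u₀ (fun _ => (1:ℝ)), if_pos (Finset.mem_univ u₀)]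
  | succ n ih =>
    intro t ht u₀
    have htK : t < K := by omega
    set tf : Fin K := ⟨t, htK⟩ with htf
    have hnot : tf ∉ Finset.univ.filter (fun j : Fin K => t + 1 ≤ (j : ℕ)) := by
      simp only [Finset.mem_filter, Finset.mem_univ, true_and, not_le]
      exact Nat.lt_succ_self t
    have hfil : Finset.univ.filter (fun j : Fin K => t ≤ (j : ℕ)) =
        insert tf (Finset.univ.filter (fun j : Fin K => t + 1 ≤ (j : ℕ))) := by
      ext j
      simp only [Finset.mem_filter, Finset.mem_insert, Finset.mem_univ, true_and]
      constructor
      · intro hj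
        rcases eq_or_lt_of_le hj with he | hl
        · left; exact Fin.ext he.symm
        · right; omega
      · rintro (rfl | hj)
        · exact le_refl t
        · omega
    have step1 : ∀ u : (j : Fin K) → Fin (m.nU j),
        (if ∀ j : Fin K, (j : ℕ) < t → u j = u₀ j then
          ∏ j ∈ Finset.univ.filter (fun j : Fin K => t ≤ (j : ℕ)), m.κ j x1 x2 u (u j)
        else 0)
        = ∑ w : Fin (m.nU tf),
            if (∀ j : Fin K, (j : ℕ) < t → u j = u₀ j) ∧ u tf = w then
              m.κ tf x1 x2 u₀ w *
                ∏ j ∈ Finset.univ.filter (fun j : Fin K => t + 1 ≤ (j : ℕ)),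
                  m.κ j x1 x2 u (u j)
            else 0 := by
      intro u
      by_cases hc : ∀ j : Fin K, (j : ℕ) < t → u j = u₀ j
      · rw [if_pos hc, hfil, Finset.prod_insert hnot,
          Finset.sum_congr rfl fun w _ => if_congr (and_iff_right hc) rfl rfl,
          Finset.sum_ite_eq Finset.univ (u tf), if_pos (Finset.mem_univ _)]
        have hk : m.κ tf x1 x2 u₀ = m.κ tf x1 x2 u :=
          m.hist tf x1 x2 u₀ u fun j hj => (hc j hj).symm
        rw [hk]
      · rw [if_neg hc]
        refine (Finset.sum_eq_zero fun w _ => ?_).symm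
        rw [if_neg (fun hcc => hc hcc.1)]
    rw [Finset.sum_congr rfl fun u _ => step1 u, Finset.sum_comm]
    have step2 : ∀ w : Fin (m.nU tf),
        (∑ u : (j : Fin K) → Fin (m.nU j),
          if (∀ j : Fin K, (j : ℕ) < t → u j = u₀ j) ∧ u tf = w then
            m.κ tf x1 x2 u₀ w *
              ∏ j ∈ Finset.univ.filter (fun j : Fin K => t + 1 ≤ (j : ℕ)),
                m.κ j x1 x2 u (u j)
          else 0) = m.κ tf x1 x2 u₀ w := by
      intro w
      have hcond : ∀ u : (j : Fin K) → Fin (m.nU j),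
          ((∀ j : Fin K, (j : ℕ) < t → u j = u₀ j) ∧ u tf = w) ↔
          (∀ j : Fin K, (j : ℕ) < t + 1 → u j = Function.update u₀ tf w j) := by
        intro u
        constructor
        · rintro ⟨h1, h2⟩ j hj
          by_cases hjt : j = tf
          · subst hjt
            rw [h2, Function.update_self]
          · have : (j : ℕ) < t := by
              rcases Nat.lt_succ_iff_lt_or_eq.mp hj with h | h
              · exact h
              · exact absurd (Fin.ext h : j = tf) hjt
            rw [h1 j this, Function.update_of_ne hjt]
        · intro h
          constructor
          · intro j hj
            have hjt : j ≠ tf := fun he => by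
              rw [he] at hj
              exact lt_irrefl t hj
            rw [h j (by omega), Function.update_of_ne hjt]
          · rw [h tf (Nat.lt_succ_self t), Function.update_self]
      calc (∑ u : (j : Fin K) → Fin (m.nU j),
          if (∀ j : Fin K, (j : ℕ) < t → u j = u₀ j) ∧ u tf = w then
            m.κ tf x1 x2 u₀ w *
              ∏ j ∈ Finset.univ.filter (fun j : Fin K => t + 1 ≤ (j : ℕ)),
                m.κ j x1 x2 u (u j)
          else 0)
          = m.κ tf x1 x2 u₀ w * ∑ u : (j : Fin K) → Fin (m.nU j),
              if (∀ j : Fin K, (j : ℕ) < t + 1 → u j = Function.update u₀ tf w j) then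
                ∏ j ∈ Finset.univ.filter (fun j : Fin K => t + 1 ≤ (j : ℕ)),
                  m.κ j x1 x2 u (u j)
              else 0 := by
            rw [Finset.mul_sum]
            refine Finset.sum_congr rfl fun u _ => ?_
            rw [if_congr (hcond u) rfl rfl]
            split_ifs
            · rfl
            · rw [mul_zero]
        _ = m.κ tf x1 x2 u₀ w := by
            rw [ih (t + 1) (by omega) (Function.update u₀ tf w), mul_one]
    rw [Finset.sum_congr rfl fun w _ => step2 w]
    exact m.sum_one tf x1 x2 u₀

lemma cond_sum (m : InterMech K X1 X2) (x1 : X1) (x2 : X2) (t : ℕ) (ht : t ≤ K)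
    (u₀ : (j : Fin K) → Fin (m.nU j)) :
    (∑ u : (j : Fin K) → Fin (m.nU j),
      if ∀ j : Fin K, (j : ℕ) < t → u j = u₀ j then ∏ j, m.κ j x1 x2 u (u j) else 0)
    = ∏ j ∈ Finset.univ.filter (fun j : Fin K => (j : ℕ) < t), m.κ j x1 x2 u₀ (u₀ j) := by
  have hsplit : ∀ u : (j : Fin K) → Fin (m.nU j),
      (∏ j, m.κ j x1 x2 u (u j)) =
      (∏ j ∈ Finset.univ.filter (fun j : Fin K => (j : ℕ) < t), m.κ j x1 x2 u (u j)) *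
      ∏ j ∈ Finset.univ.filter (fun j : Fin K => t ≤ (j : ℕ)), m.κ j x1 x2 u (u j) := by
    intro u
    rw [← Finset.prod_filter_mul_prod_filter_not Finset.univ (fun j : Fin K => (j : ℕ) < t)]
    congr 1
    refine Finset.prod_congr (Finset.filter_congr fun j _ => ?_) fun _ _ => rfl
    simp [not_lt]
  have step : ∀ u : (j : Fin K) → Fin (m.nU j),
      (if ∀ j : Fin K, (j : ℕ) < t → u j = u₀ j then ∏ j, m.κ j x1 x2 u (u j) else 0)
      = (∏ j ∈ Finset.univ.filter (fun j : Fin K => (j : ℕ) < t), m.κ j x1 x2 u₀ (u₀ j)) *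
        (if ∀ j : Fin K, (j : ℕ) < t → u j = u₀ j then
          ∏ j ∈ Finset.univ.filter (fun j : Fin K => t ≤ (j : ℕ)), m.κ j x1 x2 u (u j)
        else 0) := by
    intro u
    by_cases hc : ∀ j : Fin K, (j : ℕ) < t → u j = u₀ j
    · rw [if_pos hc, if_pos hc, hsplit u]
      congr 1
      refine Finset.prod_congr rfl fun j hj => ?_
      have hjt : (j : ℕ) < t := (Finset.mem_filter.mp hj).2
      have hk : m.κ j x1 x2 u = m.κ j x1 x2 u₀ :=
        m.hist j x1 x2 u u₀ fun j' hj' => hc j' (by omega)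
      rw [hk, hc j hjt]
    · rw [if_neg hc, if_neg hc, mul_zero]
  rw [Finset.sum_congr rfl fun u _ => step u, ← Finset.mul_sum,
    suffix_sum m x1 x2 (K - t) t (by omega) u₀, mul_one]

end Mech

section Push
open Classical

/-- Decoded kernel acting on censored histories. -/
def κD {K : ℕ} {nU : Fin K → ℕ} (k : Fin K)
    (κx : ((j : Fin K) → Fin (nU j)) → Fin (nU k) → ℝ) (udf : (j : Fin K) → Fin (nU j))
    (h : (j : Fin K) → Option (Fin (nU j))) : Fin (nU k) → ℝ :=
  if hh : ∃ u₀, h = histN (k : ℕ) u₀ then κx hh.choose else κx udf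

variable {X1 Y1 X2 Y2 : Type} [Fintype X1] [Fintype Y1] [Fintype X2] [Fintype Y2] {K : ℕ}

omit [Fintype X1] [Fintype Y1] [Fintype X2] [Fintype Y2] in
lemma mjointA_nonneg (src : X1 × Y1 × X2 × Y2 → ℝ) (m : InterMech K X1 X2)
    (hsrc : ∀ a, 0 ≤ src a) (w : X1 × Y1 × X2 × Y2 × ((j : Fin K) → Fin (m.nU j))) :
    0 ≤ mjointA src m w :=
  mul_nonneg (hsrc _) (Finset.prod_nonneg fun j _ => m.nonneg j _ _ _ _)

lemma push_fact_gen {Λ Ξ : Type} (src : X1 × Y1 × X2 × Y2 → ℝ) (m : InterMech K X1 X2)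
    (k : Fin K)
    (py : X1 → Y1 → X2 → Y2 → Λ) (px : X1 → Y1 → X2 → Y2 → Ξ)
    (κx : Ξ → ((j : Fin K) → Fin (m.nU j)) → Fin (m.nU k) → ℝ)
    (udf : (j : Fin K) → Fin (m.nU j))
    (hhist : ∀ (x : Ξ) u u', (∀ j : Fin K, (j : ℕ) < (k : ℕ) → u j = u' j) →
      κx x u = κx x u')
    (hcomp : ∀ a b c d, m.κ k a c = κx (px a b c d))
    (y : Λ) (v : Fin (m.nU k)) (x : Ξ) (h : (j : Fin K) → Option (Fin (m.nU j))) :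
    pushf (mjointA src m)
      (fun w => (py w.1 w.2.1 w.2.2.1 w.2.2.2.1,
        (w.2.2.2.2 k, (px w.1 w.2.1 w.2.2.1 w.2.2.2.1, histN (k : ℕ) w.2.2.2.2))))
      (y, (v, (x, h)))
    = pushf (mjointA src m)
        (fun w => (py w.1 w.2.1 w.2.2.1 w.2.2.2.1,
          (px w.1 w.2.1 w.2.2.1 w.2.2.2.1, histN (k : ℕ) w.2.2.2.2)))
        (y, (x, h)) * κD k (κx x) udf h v := by
  unfold pushf
  simp only [mjointA, Fintype.sum_prod_type, Finset.sum_mul, Prod.mk.injEq]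
  refine Finset.sum_congr rfl fun a _ => ?_
  refine Finset.sum_congr rfl fun b _ => ?_
  refine Finset.sum_congr rfl fun c _ => ?_
  refine Finset.sum_congr rfl fun d _ => ?_
  have hmul : ∀ (P : Prop) (inst : Decidable P) (z : ℝ),
      (if P then src (a, b, c, d) * z else 0) =
      src (a, b, c, d) * (if P then z else 0) := by
    intro P inst z
    split_ifs
    · rfl
    · rw [mul_zero]
  have hsum1 : ∀ (u₁ : (j : Fin K) → Fin (m.nU j)) (t : ℕ), t ≤ K →
      (∑ u : (j : Fin K) → Fin (m.nU j),
        if ∀ j : Fin K, (j : ℕ) < t → u j = u₁ j then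
          src (a, b, c, d) * ∏ j, m.κ j a c u (u j) else 0)
      = src (a, b, c, d) *
        ∏ j ∈ Finset.univ.filter (fun j : Fin K => (j : ℕ) < t), m.κ j a c u₁ (u₁ j) := by
    intro u₁ t ht
    rw [Finset.sum_congr rfl fun u _ => hmul _ _ _, ← Finset.mul_sum, cond_sum m a c t ht u₁]
  by_cases hbc : py a b c d = y ∧ px a b c d = x
  · by_cases hh : ∃ u₀, h = histN (k : ℕ) u₀
    · obtain ⟨u₀, rfl⟩ := hh
      set ub : (j : Fin K) → Fin (m.nU j) := Function.update u₀ k v with hub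
      have hne : ∀ j : Fin K, (j : ℕ) < (k : ℕ) → j ≠ k := fun j hj he => by
        rw [he] at hj; exact lt_irrefl _ hj
      have hiff1 : ∀ u : (j : Fin K) → Fin (m.nU j),
          (py a b c d = y ∧ u k = v ∧ px a b c d = x ∧ histN (k:ℕ) u = histN (k:ℕ) u₀) ↔
          (∀ j : Fin K, (j : ℕ) < (k : ℕ) + 1 → u j = ub j) := by
        intro u
        constructor
        · rintro ⟨-, h2, -, h4⟩ j hj
          by_cases hjk : j = k
          · subst hjk
            rw [hub, Function.update_self, h2]
          · have hjlt : (j : ℕ) < (k : ℕ) := by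
              rcases Nat.lt_succ_iff_lt_or_eq.mp hj with hlt | heq
              · exact hlt
              · exact absurd (Fin.ext heq) hjk
            rw [(histN_eq_iff _ _ _).mp h4 j hjlt, hub, Function.update_of_ne hjk]
        · intro hu
          refine ⟨hbc.1, ?_, hbc.2, (histN_eq_iff _ _ _).mpr fun j hj => ?_⟩
          · rw [hu k (Nat.lt_succ_self _), hub, Function.update_self]
          · rw [hu j (by omega), hub, Function.update_of_ne (hne j hj)]
      have hiff2 : ∀ u : (j : Fin K) → Fin (m.nU j),
          (py a b c d = y ∧ px a b c d = x ∧ histN (k:ℕ) u = histN (k:ℕ) u₀) ↔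
          (∀ j : Fin K, (j : ℕ) < (k : ℕ) → u j = u₀ j) := by
        intro u
        rw [histN_eq_iff]
        exact ⟨fun hc => hc.2.2, fun hc => ⟨hbc.1, hbc.2, hc⟩⟩
      have h1 : κD k (κx x) udf (histN (k : ℕ) u₀) v = m.κ k a c u₀ v := by
        have hex : ∃ u', histN (k : ℕ) u₀ = histN (k : ℕ) u' := ⟨u₀, rfl⟩
        unfold κD
        rw [dif_pos hex,
          hhist x hex.choose u₀ fun j hj =>
            ((histN_eq_iff _ _ _).mp hex.choose_spec j hj).symm,
          ← hbc.2, ← hcomp a b c d]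
      have hknot : k ∉ Finset.univ.filter (fun j : Fin K => (j : ℕ) < (k : ℕ)) := by simp
      have hfil : Finset.univ.filter (fun j : Fin K => (j : ℕ) < (k : ℕ) + 1) =
          insert k (Finset.univ.filter (fun j : Fin K => (j : ℕ) < (k : ℕ))) := by
        ext j
        simp only [Finset.mem_filter, Finset.mem_insert, Finset.mem_univ, true_and]
        constructor
        · intro hj
          rcases Nat.lt_succ_iff_lt_or_eq.mp hj with hlt | heq
          · right; exact hlt
          · left; exact Fin.ext heq
        · rintro (rfl | hj) <;> omega
      have h2 : (∏ j ∈ Finset.univ.filter (fun j : Fin K => (j : ℕ) < (k : ℕ) + 1),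
            m.κ j a c ub (ub j))
          = (∏ j ∈ Finset.univ.filter (fun j : Fin K => (j : ℕ) < (k : ℕ)),
              m.κ j a c u₀ (u₀ j)) * m.κ k a c u₀ v := by
        rw [hfil, Finset.prod_insert hknot]
        have hkk : m.κ k a c ub = m.κ k a c u₀ :=
          m.hist k a c ub u₀ fun j hj => by rw [hub, Function.update_of_ne (hne j hj)]
        have hbk : ub k = v := Function.update_self k v u₀
        rw [hkk, hbk, mul_comm]
        congr 1
        refine Finset.prod_congr rfl fun j hj => ?_
        have hjlt : (j : ℕ) < (k : ℕ) := (Finset.mem_filter.mp hj).2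
        have hj0 : m.κ j a c ub = m.κ j a c u₀ :=
          m.hist j a c ub u₀ fun j' hj' =>
            by rw [hub, Function.update_of_ne (hne j' (by omega))]
        rw [hj0, hub, Function.update_of_ne (hne j hjlt)]
      rw [Finset.sum_congr rfl fun u _ => if_congr (hiff1 u) rfl rfl,
        hsum1 ub ((k : ℕ) + 1) k.isLt,
        ← Finset.sum_mul,
        Finset.sum_congr rfl fun u _ => if_congr (hiff2 u) rfl rfl,
        hsum1 u₀ (k : ℕ) (le_of_lt k.isLt), h1, h2]
      ring
    · refine Eq.trans (Finset.sum_eq_zero fun u _ => ?_)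
        (Finset.sum_eq_zero fun u _ => ?_).symm
      · rw [if_neg]
        rintro ⟨-, -, -, hhh⟩
        exact hh ⟨u, hhh.symm⟩
      · rw [if_neg, zero_mul]
        rintro ⟨-, -, hhh⟩
        exact hh ⟨u, hhh.symm⟩
  · refine Eq.trans (Finset.sum_eq_zero fun u _ => ?_)
      (Finset.sum_eq_zero fun u _ => ?_).symm
    · rw [if_neg]
      rintro ⟨h1, -, h2, -⟩
      exact hbc ⟨h1, h2⟩
    · rw [if_neg, zero_mul]
      rintro ⟨h1, h2, -⟩
      exact hbc ⟨h1, h2⟩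

end Push

section Tele
open Classical

lemma κD_sum_one {K : ℕ} {nU : Fin K → ℕ} [Fintype (Fin K)] (k : Fin K)
    (κx : ((j : Fin K) → Fin (nU j)) → Fin (nU k) → ℝ) (udf : (j : Fin K) → Fin (nU j))
    (hκ : ∀ u, ∑ v, κx u v = 1) (h : (j : Fin K) → Option (Fin (nU j))) :
    ∑ v, κD k κx udf h v = 1 := by
  unfold κD
  split
  · exact hκ _
  · exact hκ _

lemma HRV_isEmpty {Ω α : Type*} [Fintype Ω] [IsEmpty Ω] [Fintype α] (q : Ω → ℝ)
    (f : Ω → α) : HRV q f = 0 := by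
  unfold HRV Hent pushf
  simp

variable {Ω Ξ Λ : Type*} [Fintype Ω] [Fintype Ξ] [Fintype Λ] {K : ℕ} {nU : Fin K → ℕ}

lemma telescope_gen (q : Ω → ℝ) (Y : Ω → Λ) (X : Ω → Ξ)
    (U : Ω → ((j : Fin K) → Fin (nU j))) :
    MIrv q Y (fun w => (U w, X w)) = MIrv q Y X +
      ∑ k : Fin K, condMIrv q Y (fun w => U w k)
        (fun w => (X w, histBefore k (U w))) := by
  classical
  set A : ℕ → ℝ := fun t => HRV q (fun w => (X w, histN t (U w))) with hA
  set B : ℕ → ℝ := fun t => HRV q (fun w => (Y w, (X w, histN t (U w)))) with hB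
  have hupd : ∀ (k : Fin K) (u : (j : Fin K) → Fin (nU j)),
      histN ((k : ℕ) + 1) u = Function.update (histN (k : ℕ) u) k (some (u k)) := by
    intro k u
    funext j
    by_cases hjk : j = k
    · subst hjk
      rw [Function.update_self]
      simp [histN]
    · rw [Function.update_of_ne hjk]
      have hjv : (j : ℕ) ≠ (k : ℕ) := fun hv => hjk (Fin.ext hv)
      by_cases hlt : (j : ℕ) < (k : ℕ)
      · have h1 : (j : ℕ) < (k : ℕ) + 1 := by omega
        simp [histN, hlt, h1]
      · have h1 : ¬ (j : ℕ) < (k : ℕ) + 1 := by omega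
        simp [histN, hlt, h1]
  have hterm : ∀ k : Fin K,
      condMIrv q Y (fun w => U w k) (fun w => (X w, histBefore k (U w)))
      = (A ((k : ℕ) + 1) - B ((k : ℕ) + 1)) - (A (k : ℕ) - B (k : ℕ)) := by
    intro k
    have ea : HRV q (fun w => (U w k, (X w, histN (k : ℕ) (U w)))) = A ((k : ℕ) + 1) := by
      refine HRV_congr q _ _
        (fun p => (p.2.1, Function.update p.2.2 k (some p.1))) (fun w => ?_) ?_
      · exact Prod.ext rfl (hupd k (U w))
      · intro w w' hp
        have hp' : (X w, histN ((k:ℕ)+1) (U w)) = (X w', histN ((k:ℕ)+1) (U w')) := by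
          rw [hupd k (U w), hupd k (U w')]
          exact hp
        have h1 : X w = X w' := congrArg Prod.fst hp'
        have h2 : histN ((k:ℕ)+1) (U w) = histN ((k:ℕ)+1) (U w') := congrArg Prod.snd hp'
        have h3 : U w k = U w' k := (histN_eq_iff _ _ _).mp h2 k (Nat.lt_succ_self _)
        have h4 : histN (k:ℕ) (U w) = histN (k:ℕ) (U w') :=
          (histN_eq_iff _ _ _).mpr fun j hj => (histN_eq_iff _ _ _).mp h2 j (by omega)
        rw [h3, h1, h4]
    have eb : HRV q (fun w => ((Y w, U w k), (X w, histN (k : ℕ) (U w)))) =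
        B ((k : ℕ) + 1) := by
      refine HRV_congr q _ _
        (fun p => (p.1.1, (p.2.1, Function.update p.2.2 k (some p.1.2)))) (fun w => ?_) ?_
      · exact Prod.ext rfl (Prod.ext rfl (hupd k (U w)))
      · intro w w' hp
        have hp' : (Y w, (X w, histN ((k:ℕ)+1) (U w)))
            = (Y w', (X w', histN ((k:ℕ)+1) (U w'))) := by
          rw [hupd k (U w), hupd k (U w')]
          exact hp
        have h0 : Y w = Y w' := congrArg Prod.fst hp'
        have h1 : X w = X w' := congrArg (fun p => p.2.1) hp'
        have h2 : histN ((k:ℕ)+1) (U w) = histN ((k:ℕ)+1) (U w') :=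
          congrArg (fun p => p.2.2) hp'
        have h3 : U w k = U w' k := (histN_eq_iff _ _ _).mp h2 k (Nat.lt_succ_self _)
        have h4 : histN (k:ℕ) (U w) = histN (k:ℕ) (U w') :=
          (histN_eq_iff _ _ _).mpr fun j hj => (histN_eq_iff _ _ _).mp h2 j (by omega)
        rw [h0, h3, h1, h4]
    simp only [condMIrv, condEntRV]
    have hBk : HRV q (fun w => (Y w, (X w, histBefore k (U w)))) = B (k : ℕ) := rfl
    have hAk : HRV q (fun w => (X w, histBefore k (U w))) = A (k : ℕ) := rfl
    have hea : HRV q (fun w => (U w k, (X w, histBefore k (U w)))) = A ((k : ℕ) + 1) := ea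
    have heb : HRV q (fun w => ((Y w, U w k), (X w, histBefore k (U w)))) =
        B ((k : ℕ) + 1) := eb
    rw [hBk, hAk, hea, heb]
    ring
  have htel : (∑ k : Fin K, condMIrv q Y (fun w => U w k)
      (fun w => (X w, histBefore k (U w))))
      = (A K - B K) - (A 0 - B 0) := by
    rw [Finset.sum_congr rfl fun k _ => hterm k]
    have := Finset.sum_range_sub (fun t => A t - B t) K
    rw [← this, ← Fin.sum_univ_eq_sum_range (fun t => (A (t+1) - B (t+1)) - (A t - B t)) K]
  have e0a : A 0 = HRV q X := by
    refine (HRV_congr q X _ (fun x => (x, fun j : Fin K => (none : Option (Fin (nU j)))))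
      (fun w => ?_) ?_).symm
    · refine Prod.ext rfl ?_
      funext j
      simp [histN]
    · intro w w' hp
      exact congrArg Prod.fst hp
  have e0b : B 0 = HRV q (fun w => (Y w, X w)) := by
    refine (HRV_congr q _ _
      (fun p => (p.1, (p.2, fun j : Fin K => (none : Option (Fin (nU j))))))
      (fun w => ?_) ?_).symm
    · refine Prod.ext rfl (Prod.ext rfl ?_)
      funext j
      simp [histN]
    · intro w w' hp
      have h0 : Y w = Y w' := congrArg Prod.fst hp
      have h1 : X w = X w' := congrArg (fun p => p.2.1) hp
      rw [h0, h1]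
  have eKa : A K = HRV q (fun w => (U w, X w)) := by
    refine (HRV_congr q (fun w => (U w, X w)) (fun w => (X w, histN (K:ℕ) (U w)))
      (fun p => (p.2, histN (K:ℕ) p.1)) (fun w => rfl) ?_).symm
    intro w w' hp
    have h1 : X w = X w' := congrArg Prod.fst hp
    have h2 : histN K (U w) = histN K (U w') := congrArg Prod.snd hp
    have h3 : U w = U w' := funext fun j => (histN_eq_iff _ _ _).mp h2 j j.isLt
    show (U w, X w) = (U w', X w')
    rw [h1, h3]
  have eKb : B K = HRV q (fun w => (Y w, (U w, X w))) := by
    refine (HRV_congr q (fun w => (Y w, (U w, X w)))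
      (fun w => (Y w, (X w, histN (K:ℕ) (U w))))
      (fun p => (p.1, (p.2.2, histN (K:ℕ) p.2.1))) (fun w => rfl) ?_).symm
    intro w w' hp
    have h0 : Y w = Y w' := congrArg Prod.fst hp
    have h1 : X w = X w' := congrArg (fun p => p.2.1) hp
    have h2 : histN K (U w) = histN K (U w') := congrArg (fun p => p.2.2) hp
    have h3 : U w = U w' := funext fun j => (histN_eq_iff _ _ _).mp h2 j j.isLt
    show (Y w, (U w, X w)) = (Y w', (U w', X w'))
    rw [h0, h1, h3]
  rw [htel]
  simp only [MIrv]
  linarith [e0a, e0b, eKa, eKb]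

end Tele

/-- **Composition theorem.**  For a `K`-round interactive mechanism initiated at agent A
(so that the Markov chains `Y2 ↔ (U^{2k-2}, X1) ↔ U_{2k-1}` and
`Y1 ↔ (U^{2k-1}, X2) ↔ U_{2k}` hold by construction):
(i) in every round initiated by agent B (0-based odd round), the fresh leakage of `Y1` at
agent B is zero, `I(Y1; U_k | X2, U^{k-1}) = 0`;
(ii) the total leakage of agent A's private data decomposes exactly over the rounds
initiated by A:
`I(Y1; U_1, …, U_K, X2) = I(Y1; X2) + ∑_{k odd (1-based)} I(Y1; U_k | X2, U^{k-1})`;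
(iii) symmetrically, `I(Y2; U_1, …, U_K, X1) = I(Y2; X1) + ∑_{k even (1-based)}
I(Y2; U_k | X1, U^{k-1})`. -/
theorem composition_theorem
    {X1 Y1 X2 Y2 : Type}
    [Fintype X1] [Fintype Y1] [Fintype X2] [Fintype Y2]
    {K : ℕ} (src : X1 × Y1 × X2 × Y2 → ℝ) (hsrc : IsPMF src)
    (m : InterMech K X1 X2) :
    -- (i) B-initiated rounds leak nothing new about Y1 at agent B
    (∀ k : Fin K, ¬ Even (k : ℕ) →
      condMIrv (mjointA src m)
        (fun w => w.2.1) (fun w => w.2.2.2.2 k)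
        (fun w => (w.2.2.1, histBefore k w.2.2.2.2)) = 0) ∧
    -- (ii) exact composition of the leakage of Y1 at agent B over A's rounds
    (MIrv (mjointA src m) (fun w => w.2.1) (fun w => (w.2.2.2.2, w.2.2.1)) =
      MIrv (mjointA src m) (fun w => w.2.1) (fun w => w.2.2.1) +
      ∑ k ∈ Finset.univ.filter (fun k : Fin K => Even (k : ℕ)),
        condMIrv (mjointA src m)
          (fun w => w.2.1) (fun w => w.2.2.2.2 k)
          (fun w => (w.2.2.1, histBefore k w.2.2.2.2))) ∧
    -- (iii) exact composition of the leakage of Y2 at agent A over B's rounds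
    (MIrv (mjointA src m) (fun w => w.2.2.2.1) (fun w => (w.2.2.2.2, w.1)) =
      MIrv (mjointA src m) (fun w => w.2.2.2.1) (fun w => w.1) +
      ∑ k ∈ Finset.univ.filter (fun k : Fin K => ¬ Even (k : ℕ)),
        condMIrv (mjointA src m)
          (fun w => w.2.2.2.1) (fun w => w.2.2.2.2 k)
          (fun w => (w.1, histBefore k w.2.2.2.2))) := by
  classical
  have hqnn : ∀ w, 0 ≤ mjointA src m w := mjointA_nonneg src m hsrc.1
  by_cases hne : Nonempty (X1 × Y1 × X2 × Y2 × ((j : Fin K) → Fin (m.nU j)))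
  · obtain ⟨⟨x1₀, y1₀, x2₀, y2₀, udf⟩⟩ := hne
    have zero1 : ∀ k : Fin K, ¬ Even (k : ℕ) →
        condMIrv (mjointA src m) (fun w => w.2.1) (fun w => w.2.2.2.2 k)
          (fun w => (w.2.2.1, histBefore k w.2.2.2.2)) = 0 := by
      intro k hk
      refine condMI_zero (mjointA src m) hqnn _ _ _
        (fun c v => κD k (fun u => m.κ k x1₀ c.1 u) udf c.2 v) ?_ ?_
      · rintro y v ⟨cx, ch⟩
        exact push_fact_gen src m k (fun _ b _ _ => b) (fun _ _ c _ => c)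
          (fun x2 u => m.κ k x1₀ x2 u) udf
          (fun x u u' hag => m.hist k x1₀ x u u' hag)
          (fun a b c d => funext fun u => m.secondSends k a x1₀ c u hk)
          y v cx ch
      · intro c _
        exact κD_sum_one k _ udf (fun u => m.sum_one k x1₀ c.1 u) c.2
    have zero2 : ∀ k : Fin K, Even (k : ℕ) →
        condMIrv (mjointA src m) (fun w => w.2.2.2.1) (fun w => w.2.2.2.2 k)
          (fun w => (w.1, histBefore k w.2.2.2.2)) = 0 := by
      intro k hk
      refine condMI_zero (mjointA src m) hqnn _ _ _
        (fun c v => κD k (fun u => m.κ k c.1 x2₀ u) udf c.2 v) ?_ ?_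
      · rintro y v ⟨cx, ch⟩
        exact push_fact_gen src m k (fun _ _ _ d => d) (fun a _ _ _ => a)
          (fun x1 u => m.κ k x1 x2₀ u) udf
          (fun x u u' hag => m.hist k x x2₀ u u' hag)
          (fun a b c d => funext fun u => m.firstSends k a c x2₀ u hk)
          y v cx ch
      · intro c _
        exact κD_sum_one k _ udf (fun u => m.sum_one k c.1 x2₀ u) c.2
    refine ⟨zero1, ?_, ?_⟩
    · have hsplit := Finset.sum_filter_add_sum_filter_not Finset.univ
        (fun k : Fin K => Even (k : ℕ))
        (fun k => condMIrv (mjointA src m) (fun w => w.2.1) (fun w => w.2.2.2.2 k)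
          (fun w => (w.2.2.1, histBefore k w.2.2.2.2)))
      have h0 : (∑ k ∈ Finset.univ.filter (fun k : Fin K => ¬ Even (k : ℕ)),
          condMIrv (mjointA src m) (fun w => w.2.1) (fun w => w.2.2.2.2 k)
            (fun w => (w.2.2.1, histBefore k w.2.2.2.2))) = 0 :=
        Finset.sum_eq_zero fun k hk => zero1 k (Finset.mem_filter.mp hk).2
      rw [h0, add_zero] at hsplit
      rw [hsplit]
      exact telescope_gen (mjointA src m) (fun w => w.2.1) (fun w => w.2.2.1)
        (fun w => w.2.2.2.2)
    · have hsplit := Finset.sum_filter_add_sum_filter_not Finset.univ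
        (fun k : Fin K => ¬ Even (k : ℕ))
        (fun k => condMIrv (mjointA src m) (fun w => w.2.2.2.1) (fun w => w.2.2.2.2 k)
          (fun w => (w.1, histBefore k w.2.2.2.2)))
      have h0 : (∑ k ∈ Finset.univ.filter (fun k : Fin K => ¬ ¬ Even (k : ℕ)),
          condMIrv (mjointA src m) (fun w => w.2.2.2.1) (fun w => w.2.2.2.2 k)
            (fun w => (w.1, histBefore k w.2.2.2.2))) = 0 :=
        Finset.sum_eq_zero fun k hk =>
          zero2 k (not_not.mp (Finset.mem_filter.mp hk).2)
      rw [h0, add_zero] at hsplit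
      rw [hsplit]
      exact telescope_gen (mjointA src m) (fun w => w.2.2.2.1) (fun w => w.1)
        (fun w => w.2.2.2.2)
  · haveI hE : IsEmpty (X1 × Y1 × X2 × Y2 × ((j : Fin K) → Fin (m.nU j))) :=
      not_nonempty_iff.mp hne
    refine ⟨fun k _ => ?_, ?_, ?_⟩ <;>
      simp [MIrv, condMIrv, condEntRV, HRV_isEmpty]

end
end

section
/- Lemma 4 (explicit lower bound on the averaged leakage reduction): Let X1, X2, Y1 be binary with (X1,X2) ~ DSBS(p) and Y1 = X1 xor N where N ~ Ber(r) is independent of X1, and Y2 empty. Fix the conditional distribution P_{X1,Y1|X2} induced by this model, and let P^{(1)}_{X2} = Ber(q) and P^{(2)}_{X2} = Ber(1-q). For parameters alpha_{2,0}, alpha_{2,1} in [0,1], define the erasure-type mechanism P_{U|X1} with P(U=0|X1=0)=1-alpha_{2,0}, P(U=e|X1=0)=alpha_{2,0}, P(U=1|X1=1)=1-alpha_{2,1}, P(U=e|X1=1)=alpha_{2,1}, define gamma(p,q,r,alpha_{2,0},alpha_{2,1}) = (1-q)*( (1-p)alpha_{2,0} + p alpha_{2,1} )*H( (1-p)alpha_{2,0}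 / ((1-p)alpha_{2,0} + p alpha_{2,1}) ) + q*( p alpha_{2,0} + (1-p) alpha_{2,1} )*H( p alpha_{2,0} / (p alpha_{2,0} + (1-p) alpha_{2,1}) ), and define C(p,q,r,alpha_{2,0},alpha_{2,1}) = (1-q)((1-p)(1-alpha_{2,0}) + p(1-alpha_{2,1}))H(r) + q(p(1-alpha_{2,0}) + (1-p)(1-alpha_{2,1}))H(r) + (1-q)((1-p)alpha_{2,0} + p alpha_{2,1}) H( ((1-p)(1-r)alpha_{2,0} + p r alpha_{2,1}) / ((1-p)alpha_{2,0} + p alpha_{2,1}) ) + q(p alpha_{2,0} + (1-p)alpha_{2,1}) H( (p r alpha_{2,0} + (1-p)(1-r)alpha_{2,1}) / (p alpha_{2,0} + (1-p)alpha_{2,1}) ). If gamma(p,q,r,alpha_{2,0},alpha_{2,1}) <= D, then ( eta^A_1(P_{X1,Y1|X2} P^{(1)}_{X2}, D) + eta^A_1(P_{X1,Y1|X2} P^{(2)}_{X2}, D) ) / 2 >= C(p,q,r,alpha_{2,0},alpha_{2,1}). -/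
open scoped BigOperators ENNReal

noncomputable section

/-- Shannon entropy in bits (logarithm base 2). -/
def Hent2 {α : Type*} [Fintype α] (p : α → ℝ) : ℝ :=
  ∑ a, -(p a * Real.logb 2 (p a))

/-- Entropy (in bits) of a random variable `f` under joint pmf `q`. -/
def HRV2 {Ω α : Type*} [Fintype Ω] [Fintype α] (q : Ω → ℝ) (f : Ω → α) : ℝ :=
  Hent2 (pushf q f)

/-- Mutual information `I(f;g)` in bits under joint pmf `q`. -/
def MIrv2 {Ω α β : Type*} [Fintype Ω] [Fintype α] [Fintype β]
    (q : Ω → ℝ) (f : Ω → α) (g : Ω → β) : ℝ :=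
  HRV2 q f + HRV2 q g - HRV2 q (fun ω => (f ω, g ω))

/-- Conditional entropy `H(f | g)` in bits under joint pmf `q`. -/
def condEntRV2 {Ω α β : Type*} [Fintype Ω] [Fintype α] [Fintype β]
    (q : Ω → ℝ) (f : Ω → α) (g : Ω → β) : ℝ :=
  HRV2 q (fun ω => (f ω, g ω)) - HRV2 q g

/-- Conditional mutual information `I(f ; g | h)` in bits under joint pmf `q`. -/
def condMIrv2 {Ω α β γ : Type*} [Fintype Ω] [Fintype α] [Fintype β] [Fintype γ]
    (q : Ω → ℝ) (f : Ω → α) (g : Ω → β) (h : Ω → γ) : ℝ :=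
  condEntRV2 q f h + condEntRV2 q g h - condEntRV2 q (fun ω => (f ω, g ω)) h

/-- Binary entropy function (in bits). -/
def binH (t : ℝ) : ℝ := -(t * Real.logb 2 t) - ((1 - t) * Real.logb 2 (1 - t))


/-- Joint pmf of `(X1, Y1, X2)` with `X2 ~ Ber(qq)`, `P_{X1|X2}` the DSBS(p) conditional
(`P(X1 ≠ X2) = p`), and `Y1 = X1 ⊕ N`, `N ~ Ber(r)` independent of `X1`. -/
def joint18 (p r qq : ℝ) : Bool × Bool × Bool → ℝ :=
  fun w => (if w.2.2 then qq else 1 - qq) * (if w.1 = w.2.2 then 1 - p else p) *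
    (if w.2.1 = w.1 then 1 - r else r)

/-- The one-round leakage-reduction function under a log-loss distortion constraint `D`
at agent B: `η^A_1(P, D) = max { H(Y1 | X2, U) : P_{U|X1}, H(X1 | X2, U) ≤ D }`
(over arbitrary finite output alphabets; `⊥` if the constraint is infeasible). -/
def etaA1LL (P : Bool × Bool × Bool → ℝ) (D : ℝ) : EReal :=
  sSup { e : EReal | ∃ (nU : ℕ) (κ : Bool → Fin nU → ℝ)
    (_ : ∀ x v, 0 ≤ κ x v) (_ : ∀ x, ∑ v, κ x v = 1),
    condEntRV2 (fun w : Bool × Bool × Bool × Fin nU =>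
        P (w.1, w.2.1, w.2.2.1) * κ w.1 w.2.2.2)
      (fun w => w.1) (fun w => (w.2.2.1, w.2.2.2)) ≤ D ∧
    e = ((condEntRV2 (fun w : Bool × Bool × Bool × Fin nU =>
        P (w.1, w.2.1, w.2.2.1) * κ w.1 w.2.2.2)
      (fun w => w.2.1) (fun w => (w.2.2.1, w.2.2.2)) : ℝ) : EReal) }

/-- The distortion `γ(p,q,r,α₂₀,α₂₁) = H(X1 | X2, U)` achieved by the erasure-type
mechanism with parameters `(α₂₀, α₂₁)`. -/
def gammaFn (p qq r a0 a1 : ℝ) : ℝ :=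
  (1 - qq) * ((1 - p) * a0 + p * a1) * binH ((1 - p) * a0 / ((1 - p) * a0 + p * a1)) +
  qq * (p * a0 + (1 - p) * a1) * binH (p * a0 / (p * a0 + (1 - p) * a1))

/-- The explicit lower bound `C(p,q,r,α₂₀,α₂₁)`. -/
def CFn (p qq r a0 a1 : ℝ) : ℝ :=
  (1 - qq) * ((1 - p) * (1 - a0) + p * (1 - a1)) * binH r +
  qq * (p * (1 - a0) + (1 - p) * (1 - a1)) * binH r +
  (1 - qq) * ((1 - p) * a0 + p * a1) *
    binH (((1 - p) * (1 - r) * a0 + p * r * a1) / ((1 - p) * a0 + p * a1)) +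
  qq * (p * a0 + (1 - p) * a1) *
    binH ((p * r * a0 + (1 - p) * (1 - r) * a1) / (p * a0 + (1 - p) * a1))


/-! Each `η`-value is bounded below by one feasible mechanism: the erasure mechanism with
parameters `(α₂₀, α₂₁)` for `Ber(q)` and, by the bit-flip symmetry of the model, the one with
parameters `(α₂₁, α₂₀)` for `Ber(1 - q)`; both give distortion `γ` and leakage `C`. For binary
`X`, `H(X | V)` is a sum of weighted binary entropies, one per value of `V`: the outputs of `U`
revealing `X1` contribute `0` to `H(X1 | X2, U)` and `H(r)` to `H(Y1 | X2, U)`, and the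
erasure output contributes the remaining terms of `γ` and `C`. -/

theorem binH_one_sub (t : ℝ) : binH (1 - t) = binH t := by
  unfold binH
  rw [sub_sub_cancel]
  ring

/-- `(A + B) · H(A / (A + B))`: the contribution to a conditional entropy `H(X | V)` of a
binary `X` from one value `v` of `V`, where `A = P(X = 0, V = v)` and `B = P(X = 1, V = v)`. -/
def weightedBinH (A B : ℝ) : ℝ := (A + B) * binH (A / (A + B))

namespace weightedBinH

@[simp]
theorem zero_left (B : ℝ) : weightedBinH 0 B = 0 := by
  simp [weightedBinH, binH]

@[simp]
theorem zero_right (A : ℝ) : weightedBinH A 0 = 0 := by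
  rcases eq_or_ne A 0 with rfl | hA
  · simp [weightedBinH, binH]
  · simp [weightedBinH, binH, div_self hA]

theorem comm (A B : ℝ) : weightedBinH A B = weightedBinH B A := by
  rcases eq_or_ne (A + B) 0 with hS | hS
  · simp [weightedBinH, hS, add_comm B A]
  · have h : B / (B + A) = 1 - A / (A + B) := by
      rw [add_comm B A]
      field_simp
      ring
    rw [weightedBinH, weightedBinH, h, binH_one_sub, add_comm B A]

theorem mul_left (c A B : ℝ) : weightedBinH (c * A) (c * B) = c * weightedBinH A B := by
  rcases eq_or_ne c 0 with rfl | hc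
  · simp
  · rw [weightedBinH, weightedBinH, ← mul_add, mul_div_mul_left A (A + B) hc, mul_assoc]

theorem eq_mul_binH_div {A B S : ℝ} (h : A + B = S) :
    weightedBinH A B = S * binH (A / S) := by
  rw [weightedBinH, h]

theorem one_sub_self (r : ℝ) : weightedBinH (1 - r) r = binH r := by
  rw [weightedBinH, sub_add_cancel, div_one, one_mul, binH_one_sub]

theorem self_one_sub (r : ℝ) : weightedBinH r (1 - r) = binH r := by
  rw [comm, one_sub_self]

/-- The grouping rule of entropy; it holds for all reals since `Real.logb` is taken of `|x|`. -/
theorem eq_neg_mul_logb (A B : ℝ) :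
    weightedBinH A B =
      -(A * Real.logb 2 A) + -(B * Real.logb 2 B) - -((A + B) * Real.logb 2 (A + B)) := by
  rcases eq_or_ne A 0 with rfl | hA
  · simp
  rcases eq_or_ne B 0 with rfl | hB
  · simp
  rcases eq_or_ne (A + B) 0 with hS | hS
  · rw [show B = -A by linarith, Real.logb_neg_eq_logb]
    simp [weightedBinH]
  have h : 1 - A / (A + B) = B / (A + B) := by
    field_simp
    ring
  rw [weightedBinH, binH, h, Real.logb_div hA hS, Real.logb_div hB hS]
  field_simp
  ring

end weightedBinH

theorem pushf_prodMk_snd_eq_sum {Ω α β : Type*} [Fintype Ω] [Fintype α]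
    (q : Ω → ℝ) (f : Ω → α) (g : Ω → β) (b : β) :
    pushf q g b = ∑ a, pushf q (fun ω => (f ω, g ω)) (a, b) := by
  classical
  unfold pushf
  rw [Finset.sum_comm]
  refine Finset.sum_congr rfl fun ω _ => ?_
  simp [Prod.ext_iff, ite_and]

theorem condEntRV2_bool_eq_sum {Ω β : Type*} [Fintype Ω] [Fintype β]
    (q : Ω → ℝ) (f : Ω → Bool) (g : Ω → β) :
    condEntRV2 q f g = ∑ b, weightedBinH (pushf q (fun ω => (f ω, g ω)) (false, b))
      (pushf q (fun ω => (f ω, g ω)) (true, b)) := by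
  simp only [condEntRV2, HRV2, Hent2, Fintype.sum_prod_type, Fintype.sum_bool,
    pushf_prodMk_snd_eq_sum q f g, ← Finset.sum_add_distrib, ← Finset.sum_sub_distrib]
  exact Finset.sum_congr rfl fun b _ => by rw [weightedBinH.comm, weightedBinH.eq_neg_mul_logb]

/-- The joint law of `(X1, Y1, X2, U)` when `U` is produced from `X1` through `κ`. -/
def jointWithMech {α β γ δ : Type*} (P : α × β × γ → ℝ) (κ : α → δ → ℝ) :
    α × β × γ × δ → ℝ :=
  fun w => P (w.1, w.2.1, w.2.2.1) * κ w.1 w.2.2.2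

section jointWithMech

variable {α β γ δ : Type*} [Fintype α] [Fintype β] [Fintype γ] [Fintype δ]
  (P : α × β × γ → ℝ) (κ : α → δ → ℝ)

theorem pushf_jointWithMech_fst (x : α) (z : γ) (u : δ) :
    pushf (jointWithMech P κ) (fun w => (w.1, w.2.2.1, w.2.2.2)) (x, z, u) =
      (∑ y, P (x, y, z)) * κ x u := by
  classical
  simp [pushf, jointWithMech, Fintype.sum_prod_type, Prod.ext_iff, ite_and, Finset.sum_mul]

theorem pushf_jointWithMech_snd (y : β) (z : γ) (u : δ) :
    pushf (jointWithMech P κ) (fun w => (w.2.1, w.2.2.1, w.2.2.2)) (y, z, u) =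
      ∑ x, P (x, y, z) * κ x u := by
  classical
  simp [pushf, jointWithMech, Fintype.sum_prod_type, Prod.ext_iff, ite_and]

end jointWithMech

theorem le_etaA1LL (P : Bool × Bool × Bool → ℝ) {D : ℝ} {n : ℕ} (κ : Bool → Fin n → ℝ)
    (hκ_nonneg : ∀ x u, 0 ≤ κ x u) (hκ_sum : ∀ x, ∑ u, κ x u = 1)
    (hD : condEntRV2 (jointWithMech P κ) (fun w => w.1) (fun w => (w.2.2.1, w.2.2.2)) ≤ D) :
    ((condEntRV2 (jointWithMech P κ) (fun w => w.2.1) (fun w => (w.2.2.1, w.2.2.2)) : ℝ) :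
      EReal) ≤ etaA1LL P D :=
  le_sSup ⟨n, κ, hκ_nonneg, hκ_sum, hD, rfl⟩

/-- The erasure mechanism: `U = 0` and `U = 1` reveal `X1`, `U = 2` is the erasure symbol `e`. -/
def erasureMech (a0 a1 : ℝ) : Bool → Fin 3 → ℝ :=
  fun x => if x then ![0, 1 - a1, a1] else ![1 - a0, 0, a0]

theorem erasureMech_nonneg {a0 a1 : ℝ} (ha0 : a0 ∈ Set.Icc (0 : ℝ) 1)
    (ha1 : a1 ∈ Set.Icc (0 : ℝ) 1) (x : Bool) (u : Fin 3) : 0 ≤ erasureMech a0 a1 x u := by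
  obtain ⟨ha0, ha0'⟩ := ha0
  obtain ⟨ha1, ha1'⟩ := ha1
  cases x <;> fin_cases u <;> simp [erasureMech] <;> linarith

theorem sum_erasureMech (a0 a1 : ℝ) (x : Bool) : ∑ u, erasureMech a0 a1 x u = 1 := by
  cases x <;> simp [erasureMech, Fin.sum_univ_three]

theorem gammaFn_eq (p qq r a0 a1 : ℝ) :
    gammaFn p qq r a0 a1 = (1 - qq) * weightedBinH ((1 - p) * a0) (p * a1) +
      qq * weightedBinH (p * a0) ((1 - p) * a1) := by
  rw [gammaFn, weightedBinH, weightedBinH]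
  ring

theorem gammaFn_one_sub_swap (p qq r a0 a1 : ℝ) :
    gammaFn p (1 - qq) r a1 a0 = gammaFn p qq r a0 a1 := by
  rw [gammaFn_eq, gammaFn_eq, sub_sub_cancel, weightedBinH.comm ((1 - p) * a1),
    weightedBinH.comm (p * a1)]
  ring

theorem CFn_one_sub_swap (p qq r a0 a1 : ℝ) : CFn p (1 - qq) r a1 a0 = CFn p qq r a0 a1 := by
  unfold CFn
  ring_nf

theorem condEntRV2_X1_erasureMech (p r qq a0 a1 : ℝ) :
    condEntRV2 (jointWithMech (joint18 p r qq) (erasureMech a0 a1)) (fun w => w.1)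
      (fun w => (w.2.2.1, w.2.2.2)) = gammaFn p qq r a0 a1 := by
  rw [gammaFn_eq, ← weightedBinH.mul_left, ← weightedBinH.mul_left, condEntRV2_bool_eq_sum]
  simp only [Fintype.sum_prod_type, Fintype.sum_bool, Fin.sum_univ_three,
    pushf_jointWithMech_fst]
  simp [joint18, erasureMech]
  -- both sides are now sums of the same `weightedBinH` terms, up to the arguments' normal form
  ring_nf

theorem condEntRV2_Y1_erasureMech (p r qq a0 a1 : ℝ) :
    condEntRV2 (jointWithMech (joint18 p r qq) (erasureMech a0 a1)) (fun w => w.2.1)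
      (fun w => (w.2.2.1, w.2.2.2)) = CFn p qq r a0 a1 := by
  have hC : CFn p qq r a0 a1 =
      weightedBinH ((1 - qq) * ((1 - p) * (1 - a0)) * (1 - r))
        ((1 - qq) * ((1 - p) * (1 - a0)) * r) +
      weightedBinH ((1 - qq) * (p * (1 - a1)) * r) ((1 - qq) * (p * (1 - a1)) * (1 - r)) +
      weightedBinH (qq * (p * (1 - a0)) * (1 - r)) (qq * (p * (1 - a0)) * r) +
      weightedBinH (qq * ((1 - p) * (1 - a1)) * r) (qq * ((1 - p) * (1 - a1)) * (1 - r)) +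
      weightedBinH ((1 - qq) * ((1 - p) * (1 - r) * a0 + p * r * a1))
        ((1 - qq) * ((1 - p) * r * a0 + p * (1 - r) * a1)) +
      weightedBinH (qq * (p * (1 - r) * a0 + (1 - p) * r * a1))
        (qq * (p * r * a0 + (1 - p) * (1 - r) * a1)) := by
    simp only [weightedBinH.mul_left, weightedBinH.one_sub_self, weightedBinH.self_one_sub]
    rw [weightedBinH.comm (p * (1 - r) * a0 + _),
      weightedBinH.eq_mul_binH_div (S := (1 - p) * a0 + p * a1) (by ring),
      weightedBinH.eq_mul_binH_div (S := p * a0 + (1 - p) * a1) (by ring), CFn]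
    ring
  rw [hC, condEntRV2_bool_eq_sum]
  simp only [Fintype.sum_prod_type, Fintype.sum_bool, Fin.sum_univ_three,
    pushf_jointWithMech_snd]
  simp [joint18, erasureMech]
  ring_nf

theorem CFn_le_etaA1LL_joint18 (p qq r D a0 a1 : ℝ) (ha0 : a0 ∈ Set.Icc (0 : ℝ) 1)
    (ha1 : a1 ∈ Set.Icc (0 : ℝ) 1) (hγ : gammaFn p qq r a0 a1 ≤ D) :
    ((CFn p qq r a0 a1 : ℝ) : EReal) ≤ etaA1LL (joint18 p r qq) D := by
  rw [← condEntRV2_Y1_erasureMech]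
  exact le_etaA1LL _ _ (erasureMech_nonneg ha0 ha1) (sum_erasureMech a0 a1)
    ((condEntRV2_X1_erasureMech p r qq a0 a1).trans_le hγ)

theorem lemma4_averaged_leakage_reduction_lower_bound_general
    (p qq r D a0 a1 : ℝ)
    (ha0 : a0 ∈ Set.Icc (0:ℝ) 1) (ha1 : a1 ∈ Set.Icc (0:ℝ) 1)
    (hγ : gammaFn p qq r a0 a1 ≤ D) :
    ((2 * CFn p qq r a0 a1 : ℝ) : EReal) ≤
      etaA1LL (joint18 p r qq) D + etaA1LL (joint18 p r (1 - qq)) D := by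
  have h₁ := CFn_le_etaA1LL_joint18 p qq r D a0 a1 ha0 ha1 hγ
  have h₂ := CFn_le_etaA1LL_joint18 p (1 - qq) r D a1 a0 ha1 ha0
    ((gammaFn_one_sub_swap p qq r a0 a1).trans_le hγ)
  rw [CFn_one_sub_swap] at h₂
  rw [two_mul, EReal.coe_add]
  exact add_le_add h₁ h₂

/-- **Lemma 4 (explicit lower bound on the averaged leakage reduction).**  For the
DSBS(p)-based source with `Y1 = X1 ⊕ N`, `N ~ Ber(r)`, the marginals
`P^{(1)}_{X2} = Ber(q)` and `P^{(2)}_{X2} = Ber(1-q)`, and any erasure-type mechanism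
parameters `α₂₀, α₂₁ ∈ [0,1]`: if `γ(p,q,r,α₂₀,α₂₁) ≤ D`, then
`(η^A_1(P_{X1,Y1|X2} P^{(1)}_{X2}, D) + η^A_1(P_{X1,Y1|X2} P^{(2)}_{X2}, D)) / 2
  ≥ C(p,q,r,α₂₀,α₂₁)`. -/
theorem lemma4_averaged_leakage_reduction_lower_bound
    (p qq r D a0 a1 : ℝ)
    (hp : p ∈ Set.Icc (0:ℝ) 1) (hq : qq ∈ Set.Icc (0:ℝ) 1) (hr : r ∈ Set.Icc (0:ℝ) 1)
    (ha0 : a0 ∈ Set.Icc (0:ℝ) 1) (ha1 : a1 ∈ Set.Icc (0:ℝ) 1)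
    (hγ : gammaFn p qq r a0 a1 ≤ D) :
    ((2 * CFn p qq r a0 a1 : ℝ) : EReal) ≤
      etaA1LL (joint18 p r qq) D + etaA1LL (joint18 p r (1 - qq)) D :=
  lemma4_averaged_leakage_reduction_lower_bound_general p qq r D a0 a1 ha0 ha1 hγ

end
end

section
/- Theorem 6 (interaction helps under log-loss): There exists a joint probability distribution P_{X1,Y1,X2} on binary X1, X2, Y1 (with Y2 empty), of the form (X1,X2) ~ DSBS(p) and Y1 = X1 xor N with N ~ Ber(r) independent of X1, and a distortion pair D = (infinity, D) under log-loss distortion, such that the optimal one-round sum leakage initiated at agent A strictly exceeds the optimal two-round sum leakage initiated at agent B: L^A_{sum,1}(P_{X1,Y1,X2}, D) > L^B_{sum,2}(P_{X1,Y1,X2}, D). Equivalently, eta^A_1 fails to be concave on the marginal perturbation set P_{X1,Y1|X2}(P) x D^2, so by the equivalence of the non-interaction conditions, two rounds of interaction strictly reduce leakage. -/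
open scoped BigOperators ENNReal

noncomputable section

/-- Joint pmf of `(X1, Y1, X2)` with `(X1, X2) ~ DSBS(p)` and `Y1 = X1 ⊕ N`,
`N ~ Ber(r)` independent of `X1` (`Y2` is empty). -/
def srcDSBSN (p r : ℝ) : Bool × Bool × Bool → ℝ :=
  fun w => (if w.1 = w.2.2 then (1 - p) / 2 else p / 2) *
    (if w.2.1 = w.1 then 1 - r else r)

/-- The optimal one-round sum leakage initiated at agent A under the log-loss distortion
constraint `H(X1 | X2, U1) ≤ D` at agent B (`Y2` is empty, so the sum leakage is
`I(Y1; U1, X2)`). -/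
def LsumA1LL (P : Bool × Bool × Bool → ℝ) (D : ℝ) : EReal :=
  sInf { L : EReal | ∃ (nU : ℕ) (κ : Bool → Fin nU → ℝ)
    (_ : ∀ x v, 0 ≤ κ x v) (_ : ∀ x, ∑ v, κ x v = 1),
    condEntRV2 (fun w : Bool × Bool × Bool × Fin nU =>
        P (w.1, w.2.1, w.2.2.1) * κ w.1 w.2.2.2)
      (fun w => w.1) (fun w => (w.2.2.1, w.2.2.2)) ≤ D ∧
    L = ((MIrv2 (fun w : Bool × Bool × Bool × Fin nU =>
        P (w.1, w.2.1, w.2.2.1) * κ w.1 w.2.2.2)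
      (fun w => w.2.1) (fun w => (w.2.2.2, w.2.2.1)) : ℝ) : EReal) }

/-- The optimal two-round sum leakage initiated at agent B (`U1` generated from `X2`,
then `U2` generated from `(X1, U1)`) under the same log-loss distortion constraint
`H(X1 | X2, U1, U2) ≤ D` at agent B. -/
def LsumB2LL (P : Bool × Bool × Bool → ℝ) (D : ℝ) : EReal :=
  sInf { L : EReal | ∃ (n1 n2 : ℕ)
    (κ1 : Bool → Fin n1 → ℝ) (κ2 : Bool → Fin n1 → Fin n2 → ℝ)
    (_ : ∀ x v, 0 ≤ κ1 x v) (_ : ∀ x, ∑ v, κ1 x v = 1)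
    (_ : ∀ x u v, 0 ≤ κ2 x u v) (_ : ∀ x u, ∑ v, κ2 x u v = 1),
    condEntRV2 (fun w : Bool × Bool × Bool × Fin n1 × Fin n2 =>
        P (w.1, w.2.1, w.2.2.1) * κ1 w.2.2.1 w.2.2.2.1 * κ2 w.1 w.2.2.2.1 w.2.2.2.2)
      (fun w => w.1) (fun w => (w.2.2.1, w.2.2.2)) ≤ D ∧
    L = ((MIrv2 (fun w : Bool × Bool × Bool × Fin n1 × Fin n2 =>
        P (w.1, w.2.1, w.2.2.1) * κ1 w.2.2.1 w.2.2.2.1 * κ2 w.1 w.2.2.2.1 w.2.2.2.2)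
      (fun w => w.2.1) (fun w => (w.2.2.2, w.2.2.1)) : ℝ) : EReal) }

/-!
Take `p = r = 1/4`, `D = 1/2` and `c = 265/1449`.

One round: for every test channel `U` of `X1` we have the Lagrangian bound
`H(Y1 | X2, U) ≤ h(1/4) + c · H(X1 | X2, U)`, hence `I(Y1; U, X2) ≥ 1 - h(1/4) - c/2` when
`H(X1 | X2, U) ≤ 1/2`. Both sides are averages over `u` of perspectives of functions of
`a = P(X1 = 1 | U = u)`, so the bound reduces to one scalar inequality `phi a ≥ 0` on `[0, 1]`.
Its second derivative changes sign exactly where `a (1 - a) = 5/36`, so `phi` is concave on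
`[0, 1/6]` and convex on `[1/6, 5/6]`; with `phi (1 - a) = phi a`, `phi 0 = 0` and `phi (1/2) > 0`
this gives `phi ≥ 0`. The multiplier `c` is small enough for the final comparison and large enough
for `phi (1/2) > 0`.

Two rounds: agent B reveals `X2`; agent A then sends `1` if `X1 ≠ X2`, and `0` or `1` with
probabilities `2/3`, `1/3` if `X1 = X2`. The distortion is exactly `1/2` and the leakage is
`(3/8) log₂ 3 - 1/2 < 1 - h(1/4) - c/2`.
-/

open Real Set

lemma HasDerivAt.negMulLog {f : ℝ → ℝ} {f' x : ℝ} (hf : HasDerivAt f f' x) (hx : f x ≠ 0) :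
    HasDerivAt (fun a => Real.negMulLog (f a)) (f' * (-Real.log (f x) - 1)) x := by
  rw [mul_comm]
  exact (hasDerivAt_negMulLog hx).comp x hf

lemma Real.negMulLog_div_two_pow {x : ℝ} (hx : x ≠ 0) (k : ℕ) :
    negMulLog (x / 2 ^ k) = x / 2 ^ k * (k * log 2 - log x) := by
  rw [negMulLog, log_div hx (by positivity), log_pow]
  ring

lemma Real.mul_log_lt_mul_log_of_pow_lt {a b : ℝ} {m n : ℕ} (ha : 0 < a) (h : a ^ m < b ^ n) :
    m * log a < n * log b := by
  rw [← log_pow, ← log_pow]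
  exact log_lt_log (by positivity) h

lemma Hent2_eq_sum_negMulLog {α : Type*} [Fintype α] (p : α → ℝ) :
    Hent2 p = (∑ a, negMulLog (p a)) / log 2 := by
  simp only [Hent2, negMulLog, logb, Finset.sum_div]
  exact Finset.sum_congr rfl fun a _ => by ring

lemma binH_eq_negMulLog (t : ℝ) : binH t = (negMulLog t + negMulLog (1 - t)) / log 2 := by
  simp only [binH, negMulLog, logb]
  ring

namespace InteractionHelps

def slope : ℝ := 265 / 1449

/-- In nats, `phi a = slope * H(X1 | X2, U = u) - H(Y1 | X2, U = u) + h(1/4)` when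
`P(X1 = 1 | U = u) = a`. -/
def phi (a : ℝ) : ℝ :=
  slope * (negMulLog (3 / 4 * (1 - a)) + negMulLog (1 / 4 * (1 - a)) + negMulLog (1 / 4 * a)
      + negMulLog (3 / 4 * a))
    + (1 - slope) * (negMulLog (1 / 4 * (3 - 2 * a)) + negMulLog (1 / 4 * (1 + 2 * a)))
    - negMulLog (1 / 16 * (9 - 8 * a)) - negMulLog (1 / 16 * (1 + 8 * a)) - 2 * negMulLog (3 / 16)
    + negMulLog (1 / 4) + negMulLog (3 / 4)

def phi' (a : ℝ) : ℝ :=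
  slope * (log (1 - a) - log a) + (1 - slope) / 2 * (log (3 - 2 * a) - log (1 + 2 * a))
    + (log (1 + 8 * a) - log (9 - 8 * a)) / 2

def phi'' (a : ℝ) : ℝ :=
  -slope / (a * (1 - a)) - 4 * (1 - slope) / (3 + 4 * (a * (1 - a)))
    + 40 / (9 + 64 * (a * (1 - a)))

lemma hasDerivAt_phi {x : ℝ} (h0 : 0 < x) (h1 : x < 1) : HasDerivAt phi (phi' x) x := by
  have hid := hasDerivAt_id' x
  have hx : x ≠ 0 := h0.ne'
  have hx1 : 1 - x ≠ 0 := by linarith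
  have hx2 : 3 - 2 * x ≠ 0 := by linarith
  have hx3 : 1 + 2 * x ≠ 0 := by linarith
  have hx4 : 9 - 8 * x ≠ 0 := by linarith
  have hx5 : 1 + 8 * x ≠ 0 := by linarith
  have t1 := HasDerivAt.negMulLog ((hid.const_sub 1).const_mul (3 / 4)) (by positivity)
  have t2 := HasDerivAt.negMulLog ((hid.const_sub 1).const_mul (1 / 4)) (by positivity)
  have t3 := HasDerivAt.negMulLog (hid.const_mul (1 / 4)) (by positivity)
  have t4 := HasDerivAt.negMulLog (hid.const_mul (3 / 4)) (by positivity)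
  have t5 := HasDerivAt.negMulLog (((hid.const_mul 2).const_sub 3).const_mul (1 / 4)) (by positivity)
  have t6 := HasDerivAt.negMulLog (((hid.const_mul 2).const_add 1).const_mul (1 / 4)) (by positivity)
  have t7 := HasDerivAt.negMulLog (((hid.const_mul 8).const_sub 9).const_mul (1 / 16)) (by positivity)
  have t8 := HasDerivAt.negMulLog (((hid.const_mul 8).const_add 1).const_mul (1 / 16)) (by positivity)
  refine (((((t1.add t2).add t3).add t4).const_mul slope).add ((t5.add t6).const_mul (1 - slope))
    |>.sub t7 |>.sub t8 |>.sub_const (2 * negMulLog (3 / 16)) |>.add_const (negMulLog (1 / 4))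
    |>.add_const (negMulLog (3 / 4))).congr_deriv ?_
  simp only [phi', log_mul (by norm_num : (3 / 4 : ℝ) ≠ 0), log_mul (by norm_num : (1 / 4 : ℝ) ≠ 0),
    log_mul (by norm_num : (1 / 16 : ℝ) ≠ 0), hx, hx1, hx2, hx3, hx4, hx5, ne_eq, not_false_eq_true]
  ring

lemma hasDerivAt_phi' {x : ℝ} (h0 : 0 < x) (h1 : x < 1) : HasDerivAt phi' (phi'' x) x := by
  have hid := hasDerivAt_id' x
  have hx : x ≠ 0 := h0.ne'
  have hx1 : 1 - x ≠ 0 := by linarith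
  have hx2 : 3 - 2 * x ≠ 0 := by linarith
  have hx2' : 3 - x * 2 ≠ 0 := by linarith
  have hx3 : 1 + 2 * x ≠ 0 := by linarith
  have hx4 : 9 - 8 * x ≠ 0 := by linarith
  have hx4' : 9 - x * 8 ≠ 0 := by linarith
  have hx5 : 1 + 8 * x ≠ 0 := by linarith
  refine ((((hid.const_sub 1).log hx1).sub (hid.log hx)).const_mul slope
    |>.add ((((hid.const_mul 2).const_sub 3).log hx2).sub (((hid.const_mul 2).const_add 1).log hx3)
      |>.const_mul ((1 - slope) / 2))
    |>.add ((((hid.const_mul 8).const_add 1).log hx5).sub (((hid.const_mul 8).const_sub 9).log hx4)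
      |>.div_const 2)).congr_deriv ?_
  rw [phi'', show 3 + 4 * (x * (1 - x)) = (3 - 2 * x) * (1 + 2 * x) by ring,
    show 9 + 64 * (x * (1 - x)) = (1 + 8 * x) * (9 - 8 * x) by ring]
  field_simp
  ring

lemma phi''_eq {a : ℝ} (h0 : 0 < a) (h1 : a < 1) :
    phi'' a = 96 * (a * (1 - a) - 5 / 36) * (477 / 1288 - a * (1 - a)) /
      (a * (1 - a) * (3 + 4 * (a * (1 - a))) * (9 + 64 * (a * (1 - a)))) := by
  have hs : 0 < a * (1 - a) := mul_pos h0 (by linarith)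
  rw [phi'', slope]
  generalize a * (1 - a) = s at hs ⊢
  field_simp
  ring

lemma phi''_nonpos {a : ℝ} (h0 : 0 < a) (h1 : a ≤ 1 / 6) : phi'' a ≤ 0 := by
  have hs : 0 < a * (1 - a) := mul_pos h0 (by linarith)
  have hs' : a * (1 - a) ≤ 5 / 36 := by nlinarith
  rw [phi''_eq h0 (by linarith)]
  generalize a * (1 - a) = s at hs hs' ⊢
  exact div_nonpos_of_nonpos_of_nonneg (by nlinarith) (by positivity)

lemma phi''_nonneg {a : ℝ} (h0 : 1 / 6 ≤ a) (h1 : a ≤ 5 / 6) : 0 ≤ phi'' a := by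
  have hs : 5 / 36 ≤ a * (1 - a) := by nlinarith
  have hs' : a * (1 - a) ≤ 1 / 4 := by nlinarith [sq_nonneg (a - 1 / 2)]
  rw [phi''_eq (by linarith) (by linarith)]
  generalize a * (1 - a) = s at hs hs' ⊢
  have : 0 < s := by linarith
  exact div_nonneg (by nlinarith) (by positivity)

lemma continuous_phi : Continuous phi := by
  unfold phi
  fun_prop

lemma concaveOn_phi : ConcaveOn ℝ (Icc 0 (1 / 6)) phi := by
  refine concaveOn_of_hasDerivWithinAt2_nonpos (f' := phi') (f'' := phi'') (convex_Icc _ _)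
    continuous_phi.continuousOn ?_ ?_ ?_ <;> intro x hx <;> rw [interior_Icc] at hx
  · exact (hasDerivAt_phi hx.1 (by linarith [hx.2])).hasDerivWithinAt
  · exact (hasDerivAt_phi' hx.1 (by linarith [hx.2])).hasDerivWithinAt
  · exact phi''_nonpos hx.1 hx.2.le

lemma convexOn_phi : ConvexOn ℝ (Icc (1 / 6) (5 / 6)) phi := by
  refine convexOn_of_hasDerivWithinAt2_nonneg (f' := phi') (f'' := phi'') (convex_Icc _ _)
    continuous_phi.continuousOn ?_ ?_ ?_ <;> intro x hx <;> rw [interior_Icc] at hx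
  · exact (hasDerivAt_phi (by linarith [hx.1]) (by linarith [hx.2])).hasDerivWithinAt
  · exact (hasDerivAt_phi' (by linarith [hx.1]) (by linarith [hx.2])).hasDerivWithinAt
  · exact phi''_nonneg hx.1.le hx.2.le

lemma phi_one_sub (a : ℝ) : phi (1 - a) = phi a := by
  unfold phi
  ring_nf

lemma phi_zero : phi 0 = 0 := by
  norm_num [phi]
  rw [show (9 / 16 : ℝ) = 3 / 4 * (3 / 4) by norm_num, show (1 / 16 : ℝ) = 1 / 4 * (1 / 4) by norm_num,
    show (3 / 16 : ℝ) = 3 / 4 * (1 / 4) by norm_num, negMulLog_mul, negMulLog_mul, negMulLog_mul]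
  ring

lemma phi_half : phi (1 / 2) = 5 / 8 * log 5 - 1979 / 3864 * log 3 - 919 / 1449 * log 2 := by
  norm_num [phi]
  rw [show (3 / 8 : ℝ) = 3 / 2 ^ 3 by norm_num, show (1 / 8 : ℝ) = 1 / 2 ^ 3 by norm_num,
    show (1 / 2 : ℝ) = 1 / 2 ^ 1 by norm_num, show (5 / 16 : ℝ) = 5 / 2 ^ 4 by norm_num,
    show (3 / 16 : ℝ) = 3 / 2 ^ 4 by norm_num, show (1 / 4 : ℝ) = 1 / 2 ^ 2 by norm_num,
    show (3 / 4 : ℝ) = 3 / 2 ^ 2 by norm_num]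
  simp only [negMulLog_div_two_pow one_ne_zero, negMulLog_div_two_pow three_ne_zero,
    negMulLog_div_two_pow (by norm_num : (5 : ℝ) ≠ 0), log_one, slope]
  push_cast
  ring

lemma phi_half_pos : 0 < phi (1 / 2) := by
  have h3 := mul_log_lt_mul_log_of_pow_lt (m := 17) (n := 27) (b := 2) (by norm_num : (0 : ℝ) < 3)
    (by norm_num)
  have h5 := mul_log_lt_mul_log_of_pow_lt (m := 109) (n := 47) (b := 5) (by norm_num : (0 : ℝ) < 2)
    (by norm_num)
  have h2 : 0 < log 2 := log_pos one_lt_two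
  rw [phi_half]
  push_cast at h3 h5
  linarith

lemma phi_half_le {a : ℝ} (ha : a ∈ Icc (1 / 6) (5 / 6)) : phi (1 / 2) ≤ phi a := by
  have ha' : 1 - a ∈ Icc (1 / 6 : ℝ) (5 / 6) := ⟨by linarith [ha.2], by linarith [ha.1]⟩
  have h := convexOn_phi.2 ha ha' (by norm_num : (0 : ℝ) ≤ 1 / 2) (by norm_num : (0 : ℝ) ≤ 1 / 2)
    (by norm_num)
  simp only [smul_eq_mul] at h
  rw [show 1 / 2 * a + 1 / 2 * (1 - a) = 1 / 2 by ring, phi_one_sub] at h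
  linarith

lemma phi_nonneg {a : ℝ} (h0 : 0 ≤ a) (h1 : a ≤ 1) : 0 ≤ phi a := by
  have left : ∀ b ∈ Icc (0 : ℝ) (1 / 6), 0 ≤ phi b := fun b hb => by
    have h := concaveOn_phi.min_le_of_mem_Icc (left_mem_Icc.2 (by norm_num))
      (right_mem_Icc.2 (by norm_num)) hb
    have h6 := phi_half_le (a := 1 / 6) ⟨le_rfl, by norm_num⟩
    rw [phi_zero] at h
    linarith [min_eq_left (phi_half_pos.trans_le h6).le]
  rcases le_total a (1 / 6) with ha | ha
  · exact left a ⟨h0, ha⟩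
  rcases le_total a (5 / 6) with ha' | ha'
  · exact phi_half_pos.le.trans (phi_half_le ⟨ha, ha'⟩)
  · simpa only [phi_one_sub] using left (1 - a) ⟨by linarith, by linarith⟩

variable {n : ℕ}

def oneRoundLaw (κ : Bool → Fin n → ℝ) : Bool × Bool × Bool × Fin n → ℝ :=
  fun w => srcDSBSN (1 / 4) (1 / 4) (w.1, w.2.1, w.2.2.1) * κ w.1 w.2.2.2

lemma oneRoundLaw_entropy_Y (κ : Bool → Fin n → ℝ) (hκ : ∀ x, ∑ v, κ x v = 1) :
    HRV2 (oneRoundLaw κ) (fun w => w.2.1) = 1 := by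
  have hY : ∀ y, pushf (oneRoundLaw κ) (fun w => w.2.1) y = 1 / 2 := fun y => by
    simp only [pushf, oneRoundLaw, srcDSBSN, Fintype.sum_prod_type, Fintype.sum_bool]
    cases y <;> simp only [Bool.true_eq_false, Bool.false_eq_true, ↓reduceIte, Finset.sum_const_zero,
      add_zero, zero_add, ← Finset.mul_sum, hκ, mul_one] <;> norm_num
  rw [HRV2, Hent2_eq_sum_negMulLog, Fintype.sum_bool, hY, hY, negMulLog, one_div, log_inv]
  field_simp
  ring

lemma oneRoundLaw_entropy_UX2 (κ : Bool → Fin n → ℝ) :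
    HRV2 (oneRoundLaw κ) (fun w => (w.2.2.2, w.2.2.1)) =
      (∑ u, (negMulLog (3 / 8 * κ false u + 1 / 8 * κ true u)
        + negMulLog (1 / 8 * κ false u + 3 / 8 * κ true u))) / log 2 := by
  rw [HRV2, Hent2_eq_sum_negMulLog, Fintype.sum_prod_type]
  congr 1
  refine Finset.sum_congr rfl fun u _ => ?_
  simp only [pushf, oneRoundLaw, srcDSBSN, Fintype.sum_prod_type, Fintype.sum_bool, Prod.mk.injEq,
    and_true, and_false, Bool.false_eq_true, Bool.true_eq_false,
    ↓reduceIte, Finset.sum_ite_eq', Finset.mem_univ, Finset.sum_const_zero, add_zero, zero_add]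
  ring_nf

lemma oneRoundLaw_entropy_X2U (κ : Bool → Fin n → ℝ) :
    HRV2 (oneRoundLaw κ) (fun w => (w.2.2.1, w.2.2.2)) =
      (∑ u, (negMulLog (3 / 8 * κ false u + 1 / 8 * κ true u)
        + negMulLog (1 / 8 * κ false u + 3 / 8 * κ true u))) / log 2 := by
  rw [HRV2, Hent2_eq_sum_negMulLog, Fintype.sum_prod_type, Fintype.sum_bool, ← Finset.sum_add_distrib]
  congr 1
  refine Finset.sum_congr rfl fun u _ => ?_
  simp only [pushf, oneRoundLaw, srcDSBSN, Fintype.sum_prod_type, Fintype.sum_bool, Prod.mk.injEq,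
    true_and, false_and, Bool.false_eq_true, Bool.true_eq_false,
    ↓reduceIte, Finset.sum_ite_eq', Finset.mem_univ, Finset.sum_const_zero, add_zero, zero_add]
  ring_nf

lemma oneRoundLaw_entropy_YUX2 (κ : Bool → Fin n → ℝ) :
    HRV2 (oneRoundLaw κ) (fun w => (w.2.1, (w.2.2.2, w.2.2.1))) =
      (∑ u, (negMulLog (9 / 32 * κ false u + 1 / 32 * κ true u)
        + negMulLog (1 / 32 * κ false u + 9 / 32 * κ true u)
        + 2 * negMulLog (3 / 32 * (κ false u + κ true u)))) / log 2 := by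
  rw [HRV2, Hent2_eq_sum_negMulLog, Fintype.sum_prod_type, Fintype.sum_bool]
  simp only [Fintype.sum_prod_type, Fintype.sum_bool, ← Finset.sum_add_distrib]
  congr 1
  refine Finset.sum_congr rfl fun u _ => ?_
  simp only [pushf, oneRoundLaw, srcDSBSN, Fintype.sum_prod_type, Fintype.sum_bool, Prod.mk.injEq,
    and_true, true_and, and_false, false_and, Bool.false_eq_true, Bool.true_eq_false,
    ↓reduceIte, Finset.sum_ite_eq', Finset.mem_univ, Finset.sum_const_zero, add_zero, zero_add]
  ring_nf

lemma oneRoundLaw_entropy_X1X2U (κ : Bool → Fin n → ℝ) :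
    HRV2 (oneRoundLaw κ) (fun w => (w.1, (w.2.2.1, w.2.2.2))) =
      (∑ u, (negMulLog (3 / 8 * κ false u) + negMulLog (1 / 8 * κ false u)
        + negMulLog (1 / 8 * κ true u) + negMulLog (3 / 8 * κ true u))) / log 2 := by
  rw [HRV2, Hent2_eq_sum_negMulLog]
  simp only [Fintype.sum_prod_type, Fintype.sum_bool, ← Finset.sum_add_distrib]
  congr 1
  refine Finset.sum_congr rfl fun u _ => ?_
  simp only [pushf, oneRoundLaw, srcDSBSN, Fintype.sum_prod_type, Fintype.sum_bool, Prod.mk.injEq,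
    true_and, and_false, false_and, Bool.false_eq_true, Bool.true_eq_false,
    ↓reduceIte, Finset.sum_ite_eq', Finset.mem_univ, Finset.sum_const_zero, add_zero, zero_add]
  ring_nf

lemma perLetter_le {A B : ℝ} (hA : 0 ≤ A) (hB : 0 ≤ B) :
    negMulLog (9 / 32 * A + 1 / 32 * B) + negMulLog (1 / 32 * A + 9 / 32 * B)
        + 2 * negMulLog (3 / 32 * (A + B))
        - (negMulLog (3 / 8 * A + 1 / 8 * B) + negMulLog (1 / 8 * A + 3 / 8 * B))
      ≤ slope * (negMulLog (3 / 8 * A) + negMulLog (1 / 8 * A) + negMulLog (1 / 8 * B)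
          + negMulLog (3 / 8 * B) - (negMulLog (3 / 8 * A + 1 / 8 * B)
          + negMulLog (1 / 8 * A + 3 / 8 * B)))
        + (negMulLog (1 / 4) + negMulLog (3 / 4)) * ((A + B) / 2) := by
  rcases (add_nonneg hA hB).eq_or_lt with h | h
  · obtain ⟨rfl, rfl⟩ : A = 0 ∧ B = 0 := ⟨by linarith, by linarith⟩
    simp
  obtain ⟨t, a, ht, ha0, ha1, rfl, rfl⟩ :
      ∃ t a : ℝ, 0 < t ∧ 0 ≤ a ∧ a ≤ 1 ∧ A = 2 * t * (1 - a) ∧ B = 2 * t * a :=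
    ⟨(A + B) / 2, B / (A + B), by positivity, by positivity, div_le_one_of_le₀ (by linarith) h.le,
      by field_simp; ring, by field_simp⟩
  rw [show 9 / 32 * (2 * t * (1 - a)) + 1 / 32 * (2 * t * a) = t * (1 / 16 * (9 - 8 * a)) by ring,
    show 1 / 32 * (2 * t * (1 - a)) + 9 / 32 * (2 * t * a) = t * (1 / 16 * (1 + 8 * a)) by ring,
    show 3 / 32 * (2 * t * (1 - a) + 2 * t * a) = t * (3 / 16) by ring,
    show 3 / 8 * (2 * t * (1 - a)) + 1 / 8 * (2 * t * a) = t * (1 / 4 * (3 - 2 * a)) by ring,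
    show 1 / 8 * (2 * t * (1 - a)) + 3 / 8 * (2 * t * a) = t * (1 / 4 * (1 + 2 * a)) by ring,
    show 3 / 8 * (2 * t * (1 - a)) = t * (3 / 4 * (1 - a)) by ring,
    show 1 / 8 * (2 * t * (1 - a)) = t * (1 / 4 * (1 - a)) by ring,
    show 1 / 8 * (2 * t * a) = t * (1 / 4 * a) by ring,
    show 3 / 8 * (2 * t * a) = t * (3 / 4 * a) by ring]
  -- each `negMulLog (t * c)` splits as `c * negMulLog t + t * negMulLog c`; the `negMulLog t`
  -- terms cancel and what remains is `t * phi a ≥ 0`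
  simp only [negMulLog_mul t]
  have key := mul_nonneg ht.le (phi_nonneg ha0 ha1)
  unfold phi at key
  linarith

lemma oneRound_leakage_ge (κ : Bool → Fin n → ℝ) (hκ0 : ∀ x v, 0 ≤ κ x v)
    (hκ1 : ∀ x, ∑ v, κ x v = 1) :
    1 - binH (1 / 4) - slope * condEntRV2 (oneRoundLaw κ) (fun w => w.1) (fun w => (w.2.2.1, w.2.2.2))
      ≤ MIrv2 (oneRoundLaw κ) (fun w => w.2.1) (fun w => (w.2.2.2, w.2.2.1)) := by
  have hsum := Finset.sum_le_sum fun u (_ : u ∈ Finset.univ) => perLetter_le (hκ0 false u) (hκ0 true u)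
  have hmass : ∑ u, (κ false u + κ true u) / 2 = 1 := by
    rw [← Finset.sum_div, Finset.sum_add_distrib, hκ1, hκ1]; norm_num
  simp only [Finset.sum_add_distrib, Finset.sum_sub_distrib, ← Finset.mul_sum, hmass] at hsum
  rw [MIrv2, condEntRV2, oneRoundLaw_entropy_Y κ hκ1, oneRoundLaw_entropy_UX2, oneRoundLaw_entropy_YUX2, oneRoundLaw_entropy_X1X2U, oneRoundLaw_entropy_X2U,
    binH_eq_negMulLog]
  simp only [Finset.sum_add_distrib, ← Finset.mul_sum]
  rw [← sub_nonneg, show (1 : ℝ) - 1 / 4 = 3 / 4 by norm_num]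
  refine (div_nonneg (sub_nonneg.2 hsum) (log_pos one_lt_two).le).trans_eq ?_
  ring

lemma le_LsumA1LL :
    ((1 - binH (1 / 4) - slope / 2 : ℝ) : EReal) ≤ LsumA1LL (srcDSBSN (1 / 4) (1 / 4)) (1 / 2) := by
  refine le_sInf ?_
  rintro L ⟨n, κ, hκ0, hκ1, hD, rfl⟩
  have hD' : condEntRV2 (oneRoundLaw κ) (fun w => w.1) (fun w => (w.2.2.1, w.2.2.2)) ≤ 1 / 2 := hD
  have hslope : 0 ≤ slope := by norm_num [slope]
  exact EReal.coe_le_coe_iff.2 <| (oneRound_leakage_ge κ hκ0 hκ1).trans'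
    (by nlinarith [mul_le_mul_of_nonneg_left hD' hslope])

def revealX2 : Bool → Fin 2 → ℝ := fun x2 v => if (v : ℕ) = x2.toNat then 1 else 0

def flagAgreement : Bool → Fin 2 → Fin 2 → ℝ := fun x1 u v =>
  if (u : ℕ) = x1.toNat then (if v = 0 then 2 / 3 else 1 / 3) else (if v = 1 then 1 else 0)

def twoRoundLaw : Bool × Bool × Bool × Fin 2 × Fin 2 → ℝ := fun w =>
  srcDSBSN (1 / 4) (1 / 4) (w.1, w.2.1, w.2.2.1) * revealX2 w.2.2.1 w.2.2.2.1
    * flagAgreement w.1 w.2.2.2.1 w.2.2.2.2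

lemma twoRound_distortion :
    condEntRV2 twoRoundLaw (fun w => w.1) (fun w => (w.2.2.1, w.2.2.2)) = 1 / 2 := by
  simp only [condEntRV2, HRV2, Hent2_eq_sum_negMulLog, pushf, twoRoundLaw, srcDSBSN, revealX2, flagAgreement,
    Fintype.sum_prod_type, Fintype.sum_bool, Fin.sum_univ_two, Prod.mk.injEq]
  norm_num
  rw [show (1 / 4 : ℝ) = 1 / 2 ^ 2 by norm_num, show (1 / 8 : ℝ) = 1 / 2 ^ 3 by norm_num]
  simp only [negMulLog_div_two_pow one_ne_zero, log_one]
  field_simp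
  ring

lemma twoRound_leakage :
    MIrv2 twoRoundLaw (fun w => w.2.1) (fun w => (w.2.2.2, w.2.2.1)) = 3 / 8 * logb 2 3 - 1 / 2 := by
  simp only [MIrv2, HRV2, Hent2_eq_sum_negMulLog, pushf, twoRoundLaw, srcDSBSN, revealX2, flagAgreement,
    Fintype.sum_prod_type, Fintype.sum_bool, Fin.sum_univ_two, Prod.mk.injEq]
  norm_num
  rw [show (1 / 2 : ℝ) = 1 / 2 ^ 1 by norm_num, show (1 / 4 : ℝ) = 1 / 2 ^ 2 by norm_num,
    show (1 / 8 : ℝ) = 1 / 2 ^ 3 by norm_num, show (1 / 16 : ℝ) = 1 / 2 ^ 4 by norm_num,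
    show (3 / 16 : ℝ) = 3 / 2 ^ 4 by norm_num]
  simp only [negMulLog_div_two_pow one_ne_zero, negMulLog_div_two_pow three_ne_zero, log_one, logb]
  field_simp
  ring

lemma binH_quarter : binH (1 / 4) = 2 - 3 / 4 * logb 2 3 := by
  rw [binH_eq_negMulLog, show (1 : ℝ) - 1 / 4 = 3 / 2 ^ 2 by norm_num, show (1 / 4 : ℝ) = 1 / 2 ^ 2 by norm_num]
  simp only [negMulLog_div_two_pow one_ne_zero, negMulLog_div_two_pow three_ne_zero, log_one, logb]
  field_simp
  ring

lemma LsumB2LL_le :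
    LsumB2LL (srcDSBSN (1 / 4) (1 / 4)) (1 / 2) ≤ ((3 / 8 * logb 2 3 - 1 / 2 : ℝ) : EReal) := by
  refine sInf_le ⟨2, 2, revealX2, flagAgreement, ?_, ?_, ?_, ?_, twoRound_distortion.le,
    congrArg _ twoRound_leakage.symm⟩
  · intro x v
    unfold revealX2
    split_ifs <;> norm_num
  · intro x
    rw [Fin.sum_univ_two]
    cases x <;> simp [revealX2]
  · intro x u v
    unfold flagAgreement
    split_ifs <;> norm_num
  · intro x u
    unfold flagAgreement
    split_ifs <;> norm_num [Fin.sum_univ_two]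

lemma twoRound_leakage_lt : 3 / 8 * logb 2 3 - 1 / 2 < 1 - binH (1 / 4) - slope / 2 := by
  have h := mul_log_lt_mul_log_of_pow_lt (m := 19) (n := 12) (b := 3) two_pos (by norm_num)
  have h3 : 19 / 12 < logb 2 3 := by
    rw [logb, lt_div_iff₀ (log_pos one_lt_two)]
    push_cast at h
    linarith
  rw [binH_quarter, slope]
  linarith

end InteractionHelps

/-- **Theorem 6 (interaction helps under log-loss).**  There exist a source of the form
`(X1,X2) ~ DSBS(p)`, `Y1 = X1 ⊕ N`, `N ~ Ber(r)` (with `Y2` empty) and a log-loss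
distortion level `D` (distortion pair `(∞, D)`) such that the optimal one-round sum
leakage initiated at agent A strictly exceeds the optimal two-round sum leakage
initiated at agent B: two rounds of interaction strictly reduce leakage. -/
theorem theorem6_interaction_helps_logloss :
    ∃ p r D : ℝ, 0 < p ∧ p < 1 ∧ 0 < r ∧ r < 1 ∧ 0 ≤ D ∧
      LsumB2LL (srcDSBSN p r) D < LsumA1LL (srcDSBSN p r) D := by
  refine ⟨1 / 4, 1 / 4, 1 / 2, by norm_num, by norm_num, by norm_num, by norm_num, by norm_num, ?_⟩
  exact InteractionHelps.LsumB2LL_le.trans_lt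
    ((EReal.coe_lt_coe_iff.2 InteractionHelps.twoRound_leakage_lt).trans_le
      InteractionHelps.le_LsumA1LL)

end
end
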